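/- arXiv:1510.02533 — 6 statements merged into one kernel-verified Lean document; each statement's English description precedes it below -/
import Mathlib

section
/- Fix constants α ≥ 2 and β ≥ 2 satisfying 2/α − 1/α² − β + β/α ≤ 0, and assume the big-data condition n ≥ βL/μ. Let φ_1, …, φ_n ∈ ℝ^d be arbitrary, let w and T be the associated Finito point and Lyapunov value, and for each index j ∈ {1,…,n} let T^(j) denote the Lyapunov value computed after the Finito update with index j (table with φ_j replaced by w, and the correspondingly recomputed point w^(j)). Then (1/n)∑_{j=1}^n T^(j) − T ≤ −(1/(αn)) T. -/
open scoped RealInnerProductSpace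

/-- The Finito point associated with a table `φ`. -/
noncomputable def finitoW (d n : ℕ) (α μ : ℝ)
    (f' : Fin n → EuclideanSpace ℝ (Fin d) → EuclideanSpace ℝ (Fin d))
    (φ : Fin n → EuclideanSpace ℝ (Fin d)) : EuclideanSpace ℝ (Fin d) :=
  (1 / (n : ℝ)) • ∑ i, φ i - (1 / (α * μ * n)) • ∑ i, f' i (φ i)

/-- The Finito Lyapunov value associated with a table `φ`. -/
noncomputable def finitoT (d n : ℕ) (α μ : ℝ)
    (f : Fin n → EuclideanSpace ℝ (Fin d) → ℝ)
    (f' : Fin n → EuclideanSpace ℝ (Fin d) → EuclideanSpace ℝ (Fin d))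
    (φ : Fin n → EuclideanSpace ℝ (Fin d)) : ℝ :=
  (1 / (n : ℝ)) * ∑ i, f i ((1 / (n : ℝ)) • ∑ i', φ i')
    - (1 / (n : ℝ)) * ∑ i, f i (φ i)
    - (1 / (n : ℝ)) * ∑ i, ⟪f' i (φ i), finitoW d n α μ f' φ - φ i⟫
    - (μ / (2 * n)) * ∑ i, ‖finitoW d n α μ f' φ - φ i‖ ^ 2
    + (μ / (2 * n)) * ∑ i, ‖(1 / (n : ℝ)) • ∑ i', φ i' - φ i‖ ^ 2

/-!
Write `D_i` for the Bregman divergence of `f_i` and `c = 2/α - 1/α²`. Then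
`n T = ∑ D_i(φ̄, φ_i) + c/(2μn) ‖∑ ∇f_i(φ_i)‖²`. Replacing `φ_j` by `w` changes this by terms
linear in `w - φ_j` and terms involving only `f_j` at `w` and `φ_j`. The latter are bounded
index by index, by the descent lemma, strong convexity and co-coercivity of `∇f_j - μ id`.
Averaged over `j`, the linear terms collapse by the three-point identity to Bregman divergences
of `∑ f_i` between `φ̄` and `w`, which strong convexity of `∑ f_i` bounds from below.
-/

theorem Fintype.sum_apply_update {ι X M : Type*} [Fintype ι] [DecidableEq ι] [AddCommGroup M]
    (g : ι → X → M) (φ : ι → X) (j : ι) (v : X) :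
    ∑ i, g i (Function.update φ j v i) = ∑ i, g i (φ i) + (g j v - g j (φ j)) := by
  rw [← Finset.add_sum_erase _ _ (Finset.mem_univ j),
    ← Finset.add_sum_erase _ (fun i ↦ g i (φ i)) (Finset.mem_univ j), Function.update_self,
    Finset.sum_congr rfl fun i hi ↦ by rw [Function.update_of_ne (Finset.ne_of_mem_erase hi)]]
  abel

section Bregman

variable {E : Type*} [NormedAddCommGroup E] [InnerProductSpace ℝ E] {f : E → ℝ} {f' : E → E}

def bregman (f : E → ℝ) (f' : E → E) (x y : E) : ℝ :=
  f x - f y - ⟪f' y, x - y⟫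

theorem bregman_add_bregman_add_inner (x y z : E) :
    bregman f f' x y + bregman f f' y z + ⟪f' y - f' z, x - y⟫ = bregman f f' x z := by
  simp only [bregman, inner_sub_left, inner_sub_right]
  ring

theorem bregman_add_bregman_swap (x y : E) :
    bregman f f' x y + bregman f f' y x = ⟪f' x - f' y, x - y⟫ := by
  simp only [bregman, inner_sub_right, real_inner_comm x, real_inner_comm y]
  ring

theorem bregman_sub_half_sq_norm (μ : ℝ) (x y : E) :
    bregman (fun z ↦ f z - μ / 2 * ‖z‖ ^ 2) (fun z ↦ f' z - μ • z) x y
      = bregman f f' x y - μ / 2 * ‖x - y‖ ^ 2 := by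
  simp only [bregman, inner_sub_left, real_inner_smul_left, norm_sub_sq_real, inner_sub_right,
    real_inner_self_eq_norm_sq, real_inner_comm x y]
  ring

theorem sum_bregman {ι : Type*} (s : Finset ι) (f : ι → E → ℝ) (f' : ι → E → E) (x y : E) :
    ∑ i ∈ s, bregman (f i) (f' i) x y
      = bregman (fun z ↦ ∑ i ∈ s, f i z) (fun z ↦ ∑ i ∈ s, f' i z) x y := by
  simp only [bregman, Finset.sum_sub_distrib, sum_inner]

theorem bregman_le_of_lipschitz [CompleteSpace E] {L : ℝ} (hf : ∀ x, HasGradientAt f (f' x) x)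
    (hL : ∀ x y, ‖f' x - f' y‖ ≤ L * ‖x - y‖) (x y : E) :
    bregman f f' x y ≤ L / 2 * ‖x - y‖ ^ 2 := by
  set v := x - y
  let g : ℝ → ℝ := fun t ↦ f (y + t • v) - t * ⟪f' y, v⟫ - L / 2 * t ^ 2 * ‖v‖ ^ 2
  have hg : ∀ t, HasDerivAt g (⟪f' (y + t • v), v⟫ - ⟪f' y, v⟫ - L * t * ‖v‖ ^ 2) t := by
    intro t
    have hline : HasDerivAt (fun t : ℝ ↦ y + t • v) v t := by
      simpa using ((hasDerivAt_id t).smul_const v).const_add y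
    have hfline := (hf (y + t • v)).hasFDerivAt.comp_hasDerivAt t hline
    rw [InnerProductSpace.toDual_apply_apply] at hfline
    refine ((hfline.sub ((hasDerivAt_id t).mul_const ⟪f' y, v⟫)).sub
      (((hasDerivAt_pow 2 t).const_mul (L / 2)).mul_const (‖v‖ ^ 2))).congr_deriv ?_
    rw [Nat.cast_ofNat, show 2 - 1 = 1 from rfl, pow_one]
    ring
  have hg_nonpos : ∀ t ∈ interior (Set.Ici (0 : ℝ)),
      ⟪f' (y + t • v), v⟫ - ⟪f' y, v⟫ - L * t * ‖v‖ ^ 2 ≤ 0 := by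
    intro t ht
    rw [interior_Ici] at ht
    have hlip : ‖f' (y + t • v) - f' y‖ ≤ L * (t * ‖v‖) := by
      simpa [norm_smul, abs_of_pos (Set.mem_Ioi.mp ht)] using hL (y + t • v) y
    rw [sub_nonpos]
    calc ⟪f' (y + t • v), v⟫ - ⟪f' y, v⟫ = ⟪f' (y + t • v) - f' y, v⟫ := (inner_sub_left _ _ _).symm
      _ ≤ ‖f' (y + t • v) - f' y‖ * ‖v‖ := real_inner_le_norm _ _
      _ ≤ L * (t * ‖v‖) * ‖v‖ := by gcongr
      _ = L * t * ‖v‖ ^ 2 := by ring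
  have hanti : AntitoneOn g (Set.Ici 0) :=
    antitoneOn_of_hasDerivWithinAt_nonpos (convex_Ici 0)
      (fun t _ ↦ (hg t).continuousAt.continuousWithinAt)
      (fun t _ ↦ (hg t).hasDerivWithinAt) hg_nonpos
  have h01 : g 1 ≤ g 0 := hanti Set.self_mem_Ici (Set.mem_Ici.mpr zero_le_one) zero_le_one
  have hg1 : g 1 = f x - ⟪f' y, v⟫ - L / 2 * ‖v‖ ^ 2 := by simp [g, v]
  have hg0 : g 0 = f y := by simp [g]
  rw [bregman]
  linarith

theorem sq_norm_sub_le_of_bregman_le {h : E → ℝ} {g : E → E} {K : ℝ} (hK : 0 ≤ K)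
    (hconv : ∀ x y, 0 ≤ bregman h g x y)
    (hsmooth : ∀ x y, bregman h g x y ≤ K / 2 * ‖x - y‖ ^ 2) (x y : E) :
    ‖g x - g y‖ ^ 2 ≤ 2 * K * bregman h g x y := by
  set u := g x - g y
  -- convexity between `x - s • u` and `y`, smoothness between `x - s • u` and `x`
  have key : ∀ s : ℝ, s * ‖u‖ ^ 2 - K / 2 * s ^ 2 * ‖u‖ ^ 2 ≤ bregman h g x y := by
    intro s
    have h3 := bregman_add_bregman_add_inner (f := h) (f' := g) (x - s • u) x y
    have hzx : x - s • u - x = -(s • u) := by abel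
    rw [hzx, inner_neg_right, real_inner_smul_right, real_inner_self_eq_norm_sq] at h3
    have hup := hsmooth (x - s • u) x
    rw [hzx, norm_neg, norm_smul, Real.norm_eq_abs, mul_pow, sq_abs] at hup
    nlinarith [hconv (x - s • u) y]
  rcases hK.eq_or_lt with rfl | hKpos
  · by_contra! hu
    rw [mul_zero, zero_mul] at hu
    have := key ((bregman h g x y + 1) / ‖u‖ ^ 2)
    rw [div_mul_cancel₀ _ hu.ne'] at this
    linarith
  · have := key K⁻¹
    field_simp at this
    linarith

theorem sq_norm_sub_sub_smul_le [CompleteSpace E] {μ L : ℝ} (hμL : μ ≤ L)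
    (hf : ∀ x, HasGradientAt f (f' x) x) (hL : ∀ x y, ‖f' x - f' y‖ ≤ L * ‖x - y‖)
    (hμ : ∀ x y, μ / 2 * ‖x - y‖ ^ 2 ≤ bregman f f' x y) (x y : E) :
    ‖f' x - f' y - μ • (x - y)‖ ^ 2 ≤ 2 * (L - μ) * (bregman f f' x y - μ / 2 * ‖x - y‖ ^ 2) := by
  have := sq_norm_sub_le_of_bregman_le (h := fun z ↦ f z - μ / 2 * ‖z‖ ^ 2)
    (g := fun z ↦ f' z - μ • z) (sub_nonneg.mpr hμL)
    (fun x y ↦ by rw [bregman_sub_half_sq_norm]; linarith [hμ x y])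
    (fun x y ↦ by
      rw [bregman_sub_half_sq_norm]; linarith [bregman_le_of_lipschitz hf hL x y]) x y
  rw [bregman_sub_half_sq_norm] at this
  convert this using 3
  rw [smul_sub]
  abel

variable {ι : Type*} [Fintype ι]

theorem sum_bregman_recenter {f : ι → E → ℝ} {f' : ι → E → E} (φ : ι → E) (x y : E) :
    ∑ i, bregman (f i) (f' i) x (φ i)
      = bregman (fun z ↦ ∑ i, f i z) (fun z ↦ ∑ i, f' i z) x y
        + ∑ i, bregman (f i) (f' i) y (φ i) + ⟪∑ i, f' i y - ∑ i, f' i (φ i), x - y⟫ := by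
  simp only [← bregman_add_bregman_add_inner x y (φ _), Finset.sum_add_distrib, sum_bregman,
    sum_inner, Finset.sum_sub_distrib, inner_sub_left]

theorem sum_bregman_update [DecidableEq ι] {f : ι → E → ℝ} {f' : ι → E → E} (φ : ι → E) (j : ι)
    (v x : E) :
    ∑ i, bregman (f i) (f' i) x (Function.update φ j v i)
      = ∑ i, bregman (f i) (f' i) x (φ i) - bregman (f j) (f' j) v (φ j)
        - ⟪f' j v - f' j (φ j), x - v⟫ := by
  rw [Fintype.sum_apply_update (fun i ↦ bregman (f i) (f' i) x),
    ← bregman_add_bregman_add_inner x v (φ j)]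
  ring

end Bregman

theorem finito_index_term_nonpos {E : Type*} [NormedAddCommGroup E] [InnerProductSpace ℝ E]
    [CompleteSpace E] {f : E → ℝ} {f' : E → E} {μ L α β N : ℝ} (hμ : 0 < μ) (hμL : μ ≤ L)
    (hα : 2 ≤ α) (hβ : 2 ≤ β) (hcond : 2 / α - 1 / α ^ 2 - β + β / α ≤ 0) (hN : β * L / μ ≤ N)
    (hf : ∀ x, HasGradientAt f (f' x) x) (hL : ∀ x y, ‖f' x - f' y‖ ≤ L * ‖x - y‖)
    (hsc : ∀ x y, μ / 2 * ‖x - y‖ ^ 2 ≤ bregman f f' x y) (x y : E) :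
    L / (2 * N) * ‖x - y‖ ^ 2 - (1 - 1 / α) * bregman f f' x y - 1 / N * ⟪f' x - f' y, x - y⟫
      + (2 / α - 1 / α ^ 2) / (2 * μ * N) * ‖f' x - f' y‖ ^ 2 ≤ 0 := by
  set D := bregman f f' x y
  set Q := ⟪f' x - f' y, x - y⟫
  set c := 2 / α - 1 / α ^ 2
  set ρ := 1 / α
  have hρ_pos : 0 < ρ := by positivity
  have hρ_le : ρ ≤ 1 / 2 := by rw [div_le_div_iff₀] <;> linarith
  have hc : c = 1 - (1 - ρ) ^ 2 := by simp only [c, ρ]; ring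
  have hcβ : c ≤ β * (1 - ρ) := by simp only [c, ρ]; linarith [show β / α = β * (1 / α) by ring]
  have hβL : β * L ≤ μ * N := by rwa [div_le_iff₀ hμ, mul_comm N] at hN
  have hL0 : 0 < L := hμ.trans_le hμL
  have hNpos : 0 < N := lt_of_lt_of_le (by positivity) hN
  have hQ : D + bregman f f' y x = Q := bregman_add_bregman_swap x y
  have hD := hsc x y
  have hD' := hsc y x
  rw [norm_sub_rev] at hD'
  have hcoco := sq_norm_sub_sub_smul_le hμL hf hL hsc x y
  rw [norm_sub_sq_real, real_inner_smul_right, norm_smul, Real.norm_eq_abs, mul_pow,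
    sq_abs] at hcoco
  have hc0 : 0 ≤ c := by rw [hc]; nlinarith
  have hc1 : c ≤ 1 := by rw [hc]; nlinarith
  have key : μ * L * ‖x - y‖ ^ 2 - 2 * μ * N * (1 - ρ) * D - 2 * μ * Q
      + c * ‖f' x - f' y‖ ^ 2 ≤ 0 := by
    have h1 := mul_le_mul_of_nonneg_left hcoco hc0
    have h2 : 2 * μ * (1 - c) * (D + μ / 2 * ‖x - y‖ ^ 2) ≤ 2 * μ * (1 - c) * Q :=
      mul_le_mul_of_nonneg_left (by linarith) (mul_nonneg (by positivity) (sub_nonneg.mpr hc1))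
    have hK : c * (L - μ) - μ * N * (1 - ρ) - μ * (1 - c) ≤ 0 := by
      linarith [mul_nonneg (sub_nonneg.mpr hcβ) hL0.le,
        mul_nonneg (sub_nonneg.mpr (show ρ ≤ 1 by linarith)) (sub_nonneg.mpr hβL)]
    have h3 := mul_le_mul_of_nonpos_left hD hK
    have hcoef : μ * ((L - μ) - μ * N * (1 - ρ) - μ * (1 - c)) ≤ 0 := by
      apply mul_nonpos_of_nonneg_of_nonpos hμ.le
      linarith [mul_nonneg (sub_nonneg.mpr hβ) hL0.le, mul_nonneg (mul_pos hμ hNpos).le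
        (sub_nonneg.mpr hρ_le), mul_nonneg hμ.le (sub_nonneg.mpr hc1)]
    linarith [mul_nonpos_of_nonpos_of_nonneg hcoef (sq_nonneg ‖x - y‖)]
  have hform : L / (2 * N) * ‖x - y‖ ^ 2 - (1 - ρ) * D - 1 / N * Q
        + c / (2 * μ * N) * ‖f' x - f' y‖ ^ 2
      = (μ * L * ‖x - y‖ ^ 2 - 2 * μ * N * (1 - ρ) * D - 2 * μ * Q + c * ‖f' x - f' y‖ ^ 2)
        / (2 * μ * N) := by
    field_simp
  rw [hform]
  exact div_nonpos_of_nonpos_of_nonneg key (by positivity)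

section Mean

variable {E : Type*} [AddCommGroup E] [Module ℝ E] {n : ℕ}

theorem sum_mean_sub_eq_zero (hn : n ≠ 0) (φ : Fin n → E) :
    ∑ i, ((1 / (n : ℝ)) • ∑ i, φ i - φ i) = 0 := by
  rw [Finset.sum_sub_distrib, Finset.sum_const, Finset.card_univ, Fintype.card_fin,
    ← Nat.cast_smul_eq_nsmul ℝ, smul_smul, mul_one_div_cancel (by exact_mod_cast hn), one_smul,
    sub_self]

theorem sum_one_div_smul_sub (hn : n ≠ 0) (φ : Fin n → E) (w : E) :
    ∑ j, (1 / (n : ℝ)) • (w - φ j) = w - (1 / (n : ℝ)) • ∑ i, φ i := by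
  rw [← Finset.smul_sum, Finset.sum_sub_distrib, smul_sub, Finset.sum_const, Finset.card_univ,
    Fintype.card_fin, ← Nat.cast_smul_eq_nsmul ℝ, smul_smul,
    one_div_mul_cancel (by exact_mod_cast hn), one_smul]

theorem smul_sum_update (φ : Fin n → E) (j : Fin n) (v : E) :
    (1 / (n : ℝ)) • ∑ i, Function.update φ j v i
      = (1 / (n : ℝ)) • ∑ i, φ i + (1 / (n : ℝ)) • (v - φ j) := by
  rw [Fintype.sum_apply_update (fun _ x ↦ x), smul_add]

end Mean

/-- What is left of `n T(φ[j ↦ w]) - n T(φ)` once the terms involving only `f_j` at `w` and `φ_j`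
have been bounded. -/
noncomputable def finitoExcess (d n : ℕ) (α μ : ℝ)
    (f : Fin n → EuclideanSpace ℝ (Fin d) → ℝ)
    (f' : Fin n → EuclideanSpace ℝ (Fin d) → EuclideanSpace ℝ (Fin d))
    (φ : Fin n → EuclideanSpace ℝ (Fin d)) (j : Fin n) : ℝ :=
  ⟪∑ i, f' i ((1 / (n : ℝ)) • ∑ i, φ i) - ∑ i, f' i (φ i),
      (1 / (n : ℝ)) • (finitoW d n α μ f' φ - φ j)⟫
    + (1 - 1 / α) * ⟪f' j (finitoW d n α μ f' φ) - f' j (φ j),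
      (1 / (n : ℝ)) • ∑ i, φ i - finitoW d n α μ f' φ⟫
    - 1 / α * bregman (f j) (f' j) (finitoW d n α μ f' φ) (φ j)

section Finito

variable {d n : ℕ} {α μ : ℝ} {f : Fin n → EuclideanSpace ℝ (Fin d) → ℝ}
  {f' : Fin n → EuclideanSpace ℝ (Fin d) → EuclideanSpace ℝ (Fin d)}

theorem sub_finitoW (φ : Fin n → EuclideanSpace ℝ (Fin d)) :
    (1 / (n : ℝ)) • ∑ i, φ i - finitoW d n α μ f' φ = (1 / (α * μ * n)) • ∑ i, f' i (φ i) := by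
  rw [finitoW, sub_sub_cancel]

theorem natCast_mul_finitoT (hn : n ≠ 0) (hα : α ≠ 0) (hμ : μ ≠ 0)
    (φ : Fin n → EuclideanSpace ℝ (Fin d)) :
    n * finitoT d n α μ f f' φ
      = ∑ i, bregman (f i) (f' i) ((1 / (n : ℝ)) • ∑ i, φ i) (φ i)
        + (2 / α - 1 / α ^ 2) / (2 * μ * n) * ‖∑ i, f' i (φ i)‖ ^ 2 := by
  set b := (1 / (n : ℝ)) • ∑ i, φ i with hb
  set S := ∑ i, f' i (φ i)
  set u := finitoW d n α μ f' φ - b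
  have hu : u = -((1 / (α * μ * n)) • S) := by rw [← sub_finitoW, neg_sub]
  have hw : ∀ i, finitoW d n α μ f' φ - φ i = (b - φ i) + u :=
    fun i ↦ (sub_add_sub_cancel' _ _ _).symm
  have hinner : ∑ i, ⟪f' i (φ i), finitoW d n α μ f' φ - φ i⟫
      = ∑ i, ⟪f' i (φ i), b - φ i⟫ + ⟪S, u⟫ := by
    simp only [hw, inner_add_right, Finset.sum_add_distrib, sum_inner, S]
  have hnorm : ∑ i, ‖finitoW d n α μ f' φ - φ i‖ ^ 2 = ∑ i, ‖b - φ i‖ ^ 2 + n * ‖u‖ ^ 2 := by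
    simp only [hw, norm_add_sq_real, Finset.sum_add_distrib]
    rw [← Finset.mul_sum, ← sum_inner, sum_mean_sub_eq_zero hn, inner_zero_left, mul_zero, add_zero,
      Finset.sum_const, Finset.card_univ, Fintype.card_fin, nsmul_eq_mul]
  have hSu : ⟪S, u⟫ = -(1 / (α * μ * n) * ‖S‖ ^ 2) := by
    rw [hu, inner_neg_right, real_inner_smul_right, real_inner_self_eq_norm_sq]
  have hu2 : ‖u‖ ^ 2 = (1 / (α * μ * n)) ^ 2 * ‖S‖ ^ 2 := by
    rw [hu, norm_neg, norm_smul, Real.norm_eq_abs, mul_pow, sq_abs]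
  rw [finitoT, ← hb, hinner, hnorm, hSu, hu2]
  simp only [bregman, Finset.sum_sub_distrib]
  field_simp
  ring

theorem natCast_mul_finitoT_update_le {L β : ℝ} (hn : n ≠ 0) (hμ : 0 < μ) (hμL : μ ≤ L)
    (hα : 2 ≤ α) (hβ : 2 ≤ β) (hcond : 2 / α - 1 / α ^ 2 - β + β / α ≤ 0)
    (hbig : β * L / μ ≤ n) (hf : ∀ i x, HasGradientAt (f i) (f' i x) x)
    (hL : ∀ i x y, ‖f' i x - f' i y‖ ≤ L * ‖x - y‖)
    (hsc : ∀ i x y, μ / 2 * ‖x - y‖ ^ 2 ≤ bregman (f i) (f' i) x y)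
    (φ : Fin n → EuclideanSpace ℝ (Fin d)) (j : Fin n) :
    n * finitoT d n α μ f f' (Function.update φ j (finitoW d n α μ f' φ))
      ≤ n * finitoT d n α μ f f' φ + finitoExcess d n α μ f f' φ j := by
  have hα0 : α ≠ 0 := by positivity
  have hn0 : (n : ℝ) ≠ 0 := by exact_mod_cast hn
  set b := (1 / (n : ℝ)) • ∑ i, φ i with hb
  set w := finitoW d n α μ f' φ
  set S := ∑ i, f' i (φ i)
  set g := f' j w - f' j (φ j)
  set δ := (1 / (n : ℝ)) • (w - φ j)
  rw [finitoExcess, natCast_mul_finitoT hn hα0 hμ.ne', natCast_mul_finitoT hn hα0 hμ.ne',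
    smul_sum_update, ← hb, sum_bregman_update, sum_bregman_recenter _ _ b,
    Fintype.sum_apply_update f', add_sub_cancel_left]
  have hdesc : bregman (fun z ↦ ∑ i, f i z) (fun z ↦ ∑ i, f' i z) (b + δ) b
      ≤ L / (2 * n) * ‖w - φ j‖ ^ 2 := by
    rw [← sum_bregman]
    calc ∑ i, bregman (f i) (f' i) (b + δ) b ≤ ∑ _i : Fin n, L / 2 * ‖δ‖ ^ 2 :=
          Finset.sum_le_sum fun i _ ↦ by simpa using bregman_le_of_lipschitz (hf i) (hL i) (b + δ) b
      _ = L / (2 * n) * ‖w - φ j‖ ^ 2 := by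
          rw [Finset.sum_const, Finset.card_univ, Fintype.card_fin, nsmul_eq_mul, norm_smul,
            Real.norm_eq_abs, mul_pow, sq_abs]
          field_simp
  have hloc := finito_index_term_nonpos hμ hμL hα hβ hcond hbig (hf j) (hL j) (hsc j) w (φ j)
  -- `φ̄ - w` is a multiple of `S`, so the cross term of `‖S + g‖²` is one of `⟪g, φ̄ - w⟫`
  have hcross : (2 / α - 1 / α ^ 2) / (2 * μ * n) * (2 * ⟪S, g⟫)
      = (2 - 1 / α) * ⟪g, b - w⟫ := by
    rw [sub_finitoW, real_inner_smul_right, real_inner_comm]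
    field_simp
    ring
  have hsplit : ⟪g, b + δ - w⟫ = ⟪g, b - w⟫ + 1 / n * ⟪g, w - φ j⟫ := by
    rw [add_sub_right_comm, inner_add_right, real_inner_smul_right]
  rw [hsplit, norm_add_sq_real]
  linarith

theorem sum_finitoExcess_le (hn : n ≠ 0) (hμ : 0 < μ) (hα : 1 ≤ α)
    (hsc : ∀ i x y, μ / 2 * ‖x - y‖ ^ 2 ≤ bregman (f i) (f' i) x y)
    (φ : Fin n → EuclideanSpace ℝ (Fin d)) :
    ∑ j, finitoExcess d n α μ f f' φ j ≤ -(1 / α) * (n * finitoT d n α μ f f' φ) := by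
  have hα0 : α ≠ 0 := by positivity
  have hn0 : (n : ℝ) ≠ 0 := by exact_mod_cast hn
  set b := (1 / (n : ℝ)) • ∑ i, φ i with hb
  set w := finitoW d n α μ f' φ
  set S := ∑ i, f' i (φ i)
  have hstrong : ∀ x y, n * (μ / 2 * ‖x - y‖ ^ 2)
      ≤ bregman (fun z ↦ ∑ i, f i z) (fun z ↦ ∑ i, f' i z) x y := fun x y ↦ by
    rw [← sum_bregman]
    simpa using Finset.sum_le_sum fun i (_ : i ∈ Finset.univ) ↦ hsc i x y
  have hbw : ‖b - w‖ ^ 2 = (1 / (α * μ * n)) ^ 2 * ‖S‖ ^ 2 := by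
    rw [sub_finitoW, norm_smul, Real.norm_eq_abs, mul_pow, sq_abs]
  have hSbw : ⟪S, b - w⟫ = 1 / (α * μ * n) * ‖S‖ ^ 2 := by
    rw [sub_finitoW, real_inner_smul_right, real_inner_self_eq_norm_sq]
  have hbw1 := hstrong b w
  have hbw2 := hstrong w b
  rw [norm_sub_rev, hbw] at hbw2
  rw [hbw] at hbw1
  have hswap := bregman_add_bregman_swap (f := fun z ↦ ∑ i, f i z) (f' := fun z ↦ ∑ i, f' i z) b w
  have hcoef : (2 - 1 / α) * (n * (μ / 2 * ((1 / (α * μ * n)) ^ 2 * ‖S‖ ^ 2)))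
      = 1 / α * ((2 / α - 1 / α ^ 2) / (2 * μ * n) * ‖S‖ ^ 2) := by
    field_simp
  have hρ : 0 ≤ 1 - 1 / α := by rw [sub_nonneg, div_le_one₀] <;> linarith
  have h1 := mul_le_mul_of_nonneg_left hbw1 hρ
  simp only [finitoExcess, Finset.sum_add_distrib, Finset.sum_sub_distrib, ← Finset.mul_sum,
    ← inner_sum, ← sum_inner]
  rw [sum_one_div_smul_sub hn, ← hb, ← neg_sub b w, inner_neg_right,
    natCast_mul_finitoT hn hα0 hμ.ne', sum_bregman_recenter φ b w]
  simp only [inner_sub_left] at hswap ⊢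
  linarith

end Finito

theorem finito_lyapunov_one_step (d n : ℕ) (hn : 1 ≤ n) (μ L α β : ℝ)
    (hμ : 0 < μ) (hμL : μ ≤ L) (hα : 2 ≤ α) (hβ : 2 ≤ β)
    (hcond : 2 / α - 1 / α ^ 2 - β + β / α ≤ 0)
    (hbig : β * L / μ ≤ (n : ℝ))
    (f : Fin n → EuclideanSpace ℝ (Fin d) → ℝ)
    (f' : Fin n → EuclideanSpace ℝ (Fin d) → EuclideanSpace ℝ (Fin d))
    (hgrad : ∀ i x, HasGradientAt (f i) (f' i x) x)
    (hsmooth : ∀ i x y, ‖f' i x - f' i y‖ ≤ L * ‖x - y‖)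
    (hsc : ∀ i x y, f i x ≥ f i y + ⟪f' i y, x - y⟫ + μ / 2 * ‖x - y‖ ^ 2)
    (φ : Fin n → EuclideanSpace ℝ (Fin d)) :
    (1 / (n : ℝ)) * ∑ j, finitoT d n α μ f f'
        (Function.update φ j (finitoW d n α μ f' φ))
      - finitoT d n α μ f f' φ
      ≤ -(1 / (α * n)) * finitoT d n α μ f f' φ := by
  have hn0 : n ≠ 0 := by omega
  have hnpos : (0 : ℝ) < n := by exact_mod_cast hn
  have hsc' : ∀ i x y, μ / 2 * ‖x - y‖ ^ 2 ≤ bregman (f i) (f' i) x y := fun i x y ↦ by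
    rw [bregman]
    linarith [hsc i x y]
  set T := finitoT d n α μ f f' φ
  have hsum : n * ∑ j, finitoT d n α μ f f' (Function.update φ j (finitoW d n α μ f' φ))
      ≤ n * (n * T - 1 / α * T) := by
    rw [Finset.mul_sum]
    calc _ ≤ ∑ j, (n * T + _) := Finset.sum_le_sum fun j _ ↦
            natCast_mul_finitoT_update_le hn0 hμ hμL hα hβ hcond hbig hgrad hsmooth hsc' φ j
      _ ≤ _ := by
        rw [Finset.sum_add_distrib, Finset.sum_const, Finset.card_univ, Fintype.card_fin,
          nsmul_eq_mul]
        linarith [sum_finitoExcess_le hn0 hμ (one_le_two.trans hα) hsc' φ]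
  calc _ ≤ (1 / (n : ℝ)) * (n * T - 1 / α * T) - T := by
        gcongr
        exact le_of_mul_le_mul_left hsum hnpos
    _ = -(1 / (α * n)) * T := by
        field_simp
        ring
end

section
/- Suppose n ≥ βL/μ for some β > 0. Then for every x ∈ ℝ^d and all φ_1, …, φ_n ∈ ℝ^d: f(x) ≥ (1/n)∑_i f_i(φ_i) + (1/n)∑_i ⟨∇f_i(φ_i), x − φ_i⟩ + (β/(2μn²))∑_i ‖∇f_i(x) − ∇f_i(φ_i)‖² + (βL/(2n²))∑_i ‖x − φ_i‖² + (β/n²)∑_i ⟨∇f_i(x) − ∇f_i(φ_i), φ_i − x⟩. -/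
open scoped RealInnerProductSpace

/-!
For each `i` the summand is bounded separately. Write `D = f x - f y - ⟪∇f y, x - y⟫` for the
Bregman divergence. The function `f - μ/2 ‖·‖²` is convex and `(L - μ)`-smooth, so its
cocoercivity is the interpolation inequality
`‖∇f x - ∇f y - μ (x - y)‖² ≤ 2 (L - μ) (D - μ/2 ‖x - y‖²)`.
Expanding it, `β` times the quadratic terms of the claim is at most
`2β(L - μ) D ≤ 2βL D ≤ 2μn D`, using `D ≥ 0` and `n ≥ βL/μ`; divide by `2μn²` and sum over `i`.
-/

section Bregman

variable {E : Type*} [NormedAddCommGroup E] [InnerProductSpace ℝ E]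

def bregmanDiv (f : E → ℝ) (f' : E → E) (x y : E) : ℝ := f x - f y - ⟪f' y, x - y⟫

theorem bregmanDiv_sub_half_sq_norm (f : E → ℝ) (f' : E → E) (μ : ℝ) (x y : E) :
    bregmanDiv (fun z => f z - μ / 2 * ‖z‖ ^ 2) (fun z => f' z - μ • z) x y
      = bregmanDiv f f' x y - μ / 2 * ‖x - y‖ ^ 2 := by
  simp only [bregmanDiv, inner_sub_left, real_inner_smul_left, inner_sub_right, norm_sub_sq_real,
    real_inner_self_eq_norm_sq, real_inner_comm x y]
  ring

variable {f : E → ℝ} {f' : E → E}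

theorem mul_sq_norm_sub_le_bregmanDiv {L : ℝ}
    (hupper : ∀ x y, bregmanDiv f f' x y ≤ L / 2 * ‖x - y‖ ^ 2)
    (hconv : ∀ x y, 0 ≤ bregmanDiv f f' x y) (x y : E) (t : ℝ) :
    (t - L / 2 * t ^ 2) * ‖f' x - f' y‖ ^ 2 ≤ bregmanDiv f f' x y := by
  set g := f' x - f' y
  -- bound `f` at `z = x - t • g` from below by convexity at `y` and from above by smoothness at `x`
  set z := x - t • g
  have hlow := hconv z y
  have hup := hupper z x
  have hzx : z - x = -(t • g) := by simp [z]
  have hzy : z - y = (x - y) - t • g := by simp only [z]; abel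
  have hg : t * ⟪f' x, g⟫ - t * ⟪f' y, g⟫ = t * ‖g‖ ^ 2 := by
    rw [← mul_sub, ← inner_sub_left, real_inner_self_eq_norm_sq]
  rw [bregmanDiv, hzy, inner_sub_right, real_inner_smul_right] at hlow
  rw [bregmanDiv, hzx, norm_neg, norm_smul, Real.norm_eq_abs, mul_pow, sq_abs, inner_neg_right,
    real_inner_smul_right] at hup
  rw [bregmanDiv]
  linarith

theorem sq_norm_sub_le_two_mul_bregmanDiv {L : ℝ} (hL : 0 ≤ L)
    (hupper : ∀ x y, bregmanDiv f f' x y ≤ L / 2 * ‖x - y‖ ^ 2)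
    (hconv : ∀ x y, 0 ≤ bregmanDiv f f' x y) (x y : E) :
    ‖f' x - f' y‖ ^ 2 ≤ 2 * L * bregmanDiv f f' x y := by
  rcases hL.eq_or_lt with rfl | hL
  · have h := mul_sq_norm_sub_le_bregmanDiv hupper hconv x y 1
    have hD := hupper x y
    norm_num at h hD
    rw [mul_zero, zero_mul]
    exact h.trans hD
  · have h := mul_sq_norm_sub_le_bregmanDiv hupper hconv x y L⁻¹
    have ht : L⁻¹ - L / 2 * L⁻¹ ^ 2 = (2 * L)⁻¹ := by field_simp; ring
    rw [ht, inv_mul_le_iff₀ (by positivity)] at h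
    exact h

theorem bregmanDiv_le_of_lipschitz_gradient [CompleteSpace E] {L : ℝ}
    (hgrad : ∀ x, HasGradientAt f (f' x) x)
    (hsmooth : ∀ x y, ‖f' x - f' y‖ ≤ L * ‖x - y‖) (x y : E) :
    bregmanDiv f f' x y ≤ L / 2 * ‖x - y‖ ^ 2 := by
  set v := x - y
  set K := ⟪f' y, v⟫
  set M := L / 2 * ‖v‖ ^ 2
  set ψ : ℝ → ℝ := fun t => f (y + t • v) - t * K - t ^ 2 * M
  have hψ : ∀ t, HasDerivAt ψ (⟪f' (y + t • v), v⟫ - K - 2 * t * M) t := by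
    intro t
    have hline : HasDerivAt (fun s : ℝ => y + s • v) v t := by
      simpa using ((hasDerivAt_id t).smul_const v).const_add y
    have hf : HasDerivAt (fun s : ℝ => f (y + s • v)) ⟪f' (y + t • v), v⟫ t := by
      simpa [Function.comp_def] using (hgrad _).hasFDerivAt.comp_hasDerivAt t hline
    have hK : HasDerivAt (fun s : ℝ => s * K) K t := by simpa using (hasDerivAt_id t).mul_const K
    have hM : HasDerivAt (fun s : ℝ => s ^ 2 * M) (2 * t * M) t := by
      simpa using (hasDerivAt_pow 2 t).mul_const M
    exact (hf.sub hK).sub hM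
  have hψ' : ∀ t ∈ interior (Set.Ici (0 : ℝ)), ⟪f' (y + t • v), v⟫ - K - 2 * t * M ≤ 0 := by
    intro t ht
    rw [interior_Ici, Set.mem_Ioi] at ht
    rw [sub_nonpos]
    have hlip := hsmooth (y + t • v) y
    rw [add_sub_cancel_left, norm_smul, Real.norm_of_nonneg ht.le] at hlip
    calc ⟪f' (y + t • v), v⟫ - K = ⟪f' (y + t • v) - f' y, v⟫ := (inner_sub_left ..).symm
      _ ≤ ‖f' (y + t • v) - f' y‖ * ‖v‖ := real_inner_le_norm ..
      _ ≤ L * (t * ‖v‖) * ‖v‖ := by gcongr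
      _ = 2 * t * M := by ring
  have hanti : AntitoneOn ψ (Set.Ici 0) :=
    antitoneOn_of_hasDerivWithinAt_nonpos (convex_Ici 0)
      (fun t _ => (hψ t).continuousAt.continuousWithinAt) (fun t _ => (hψ t).hasDerivWithinAt) hψ'
  have h10 : ψ 1 ≤ ψ 0 := hanti Set.self_mem_Ici (zero_le_one' ℝ) zero_le_one
  norm_num [ψ, K, M, v] at h10
  show f x - f y - ⟪f' y, x - y⟫ ≤ L / 2 * ‖x - y‖ ^ 2
  linarith

theorem sq_norm_sub_sub_smul_le_bregmanDiv [CompleteSpace E] {μ L : ℝ} (hμL : μ ≤ L)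
    (hgrad : ∀ x, HasGradientAt f (f' x) x)
    (hsmooth : ∀ x y, ‖f' x - f' y‖ ≤ L * ‖x - y‖)
    (hsc : ∀ x y, μ / 2 * ‖x - y‖ ^ 2 ≤ bregmanDiv f f' x y) (x y : E) :
    ‖f' x - f' y - μ • (x - y)‖ ^ 2
      ≤ 2 * (L - μ) * (bregmanDiv f f' x y - μ / 2 * ‖x - y‖ ^ 2) := by
  -- cocoercivity of the convex, `(L - μ)`-smooth function `f - μ/2 ‖·‖²`
  have h := sq_norm_sub_le_two_mul_bregmanDiv (f := fun z => f z - μ / 2 * ‖z‖ ^ 2)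
    (f' := fun z => f' z - μ • z) (sub_nonneg.2 hμL)
    (fun a b => by
      rw [bregmanDiv_sub_half_sq_norm]
      linarith [bregmanDiv_le_of_lipschitz_gradient hgrad hsmooth a b])
    (fun a b => by rw [bregmanDiv_sub_half_sq_norm]; linarith [hsc a b]) x y
  rwa [bregmanDiv_sub_half_sq_norm, sub_sub_sub_comm, ← smul_sub] at h

theorem finito_scaled_lower_bound_single [CompleteSpace E] {N μ L β : ℝ} (hN : 0 < N)
    (hμ : 0 < μ) (hμL : μ ≤ L) (hβ : 0 ≤ β) (hbig : β * L ≤ N * μ)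
    (hgrad : ∀ x, HasGradientAt f (f' x) x)
    (hsmooth : ∀ x y, ‖f' x - f' y‖ ≤ L * ‖x - y‖)
    (hsc : ∀ x y, f x ≥ f y + ⟪f' y, x - y⟫ + μ / 2 * ‖x - y‖ ^ 2) (x y : E) :
    1 / N * f y + 1 / N * ⟪f' y, x - y⟫
      + β / (2 * μ * N ^ 2) * ‖f' x - f' y‖ ^ 2
      + β * L / (2 * N ^ 2) * ‖x - y‖ ^ 2
      + β / N ^ 2 * ⟪f' x - f' y, y - x⟫ ≤ 1 / N * f x := by
  have hsc' : ∀ x y, μ / 2 * ‖x - y‖ ^ 2 ≤ bregmanDiv f f' x y := fun x y => by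
    rw [bregmanDiv]; linarith [hsc x y]
  set D := bregmanDiv f f' x y
  have hD : 0 ≤ D := le_trans (by positivity) (hsc' x y)
  have hinterp := sq_norm_sub_sub_smul_le_bregmanDiv hμL hgrad hsmooth hsc' x y
  rw [norm_sub_sq_real, real_inner_smul_right, norm_smul, Real.norm_of_nonneg hμ.le] at hinterp
  have key : β * (‖f' x - f' y‖ ^ 2 - 2 * μ * ⟪f' x - f' y, x - y⟫ + μ * L * ‖x - y‖ ^ 2)
      ≤ 2 * μ * N * D :=
    calc _ ≤ β * (2 * (L - μ) * D) := by gcongr; linarith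
      _ ≤ 2 * (β * L) * D := by nlinarith [mul_nonneg (mul_nonneg hβ hμ.le) hD]
      _ ≤ 2 * (N * μ) * D := by gcongr
      _ = 2 * μ * N * D := by ring
  rw [← neg_sub x y, inner_neg_right]
  simp only [D, bregmanDiv] at key
  field_simp
  linarith

end Bregman

theorem finito_scaled_lower_bound (d n : ℕ) (hn : 1 ≤ n) (μ L β : ℝ)
    (hμ : 0 < μ) (hμL : μ ≤ L) (hβ : 0 < β)
    (hbig : β * L / μ ≤ (n : ℝ))
    (f : Fin n → EuclideanSpace ℝ (Fin d) → ℝ)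
    (f' : Fin n → EuclideanSpace ℝ (Fin d) → EuclideanSpace ℝ (Fin d))
    (hgrad : ∀ i x, HasGradientAt (f i) (f' i x) x)
    (hsmooth : ∀ i x y, ‖f' i x - f' i y‖ ≤ L * ‖x - y‖)
    (hsc : ∀ i x y, f i x ≥ f i y + ⟪f' i y, x - y⟫ + μ / 2 * ‖x - y‖ ^ 2)
    (x : EuclideanSpace ℝ (Fin d)) (φ : Fin n → EuclideanSpace ℝ (Fin d)) :
    (1 / (n : ℝ)) * ∑ i, f i x ≥
      (1 / (n : ℝ)) * ∑ i, f i (φ i)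
      + (1 / (n : ℝ)) * ∑ i, ⟪f' i (φ i), x - φ i⟫
      + (β / (2 * μ * (n : ℝ) ^ 2)) * ∑ i, ‖f' i x - f' i (φ i)‖ ^ 2
      + (β * L / (2 * (n : ℝ) ^ 2)) * ∑ i, ‖x - φ i‖ ^ 2
      + (β / (n : ℝ) ^ 2) * ∑ i, ⟪f' i x - f' i (φ i), φ i - x⟫ := by
  have hn0 : (0 : ℝ) < n := by exact_mod_cast hn
  have hbig' : β * L ≤ n * μ := by rwa [div_le_iff₀ hμ] at hbig
  simp only [ge_iff_le, Finset.mul_sum, ← Finset.sum_add_distrib]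
  exact Finset.sum_le_sum fun i _ => finito_scaled_lower_bound_single hn0 hμ hμL hβ.le hbig'
    (hgrad i) (hsmooth i) (hsc i) x (φ i)
end

section
/- Let f : ℝ^d → ℝ be differentiable, L-smooth and μ-strongly convex with 0 < μ < L, and let l : ℝ^d → ℝ be a quadratic with curvature μ (i.e. l(x) = l(y) + ⟨∇l(y), x − y⟩ + (μ/2)‖x − y‖² for all x, y) such that l(x) ≤ f(x) for all x. Fix w ∈ ℝ^d, put δ = f(w) − l(w), fix a unit vector r, and set v = w + √(2δ/(L−μ)) r and b(x) = l(v) + ⟨∇l(v), x − v⟩ + (L/2)‖x − v‖². Then for every point x = w + t r with 0 ≤ t ≤ √(2δ/(L−μ)) one has f(x) ≥ b(x) and b(x) − l(x) = ((L−μ)/2)‖x − v‖² ≥ 0; in particular f(w) − l(w) = ((L−μ)/2)‖w − v‖². -/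
/-!
Restrict everything to the line `t ↦ w + t • r`. There the gap `φ t = f (w + t • r) - l (w + t • r)`
is nonnegative and its derivative grows at most at rate `K = L - μ`, because `l` is an exact
quadratic of curvature `μ`. This gives the descent inequality
`φ u ≤ φ t + φ' t * (u - t) + K / 2 * (u - t) ^ 2`. With `u = t - φ' t / K` and `φ ≥ 0` it yields
`φ' t ^ 2 ≤ 2 * K * φ t`, and with `u = 0` it then yields `√(φ 0) ≤ √(φ t) + t * √(K / 2)`, i.e.
`φ t ≥ K / 2 * (s - t) ^ 2` for `s = √(2 * φ 0 / K)`. Finally `b - l = K / 2 * ‖· - v‖ ^ 2`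
holds identically, again because `l` is an exact quadratic.
-/

open Set
open scoped RealInnerProductSpace

section DescentLemma

variable {φ φ' : ℝ → ℝ} {K : ℝ}

theorem le_add_deriv_mul_add_sq_of_deriv_sub_le (hφ : ∀ t, HasDerivAt φ (φ' t) t)
    (hφ' : ∀ a b, a ≤ b → φ' b - φ' a ≤ K * (b - a)) (t u : ℝ) :
    φ u ≤ φ t + φ' t * (u - t) + K / 2 * (u - t) ^ 2 := by
  set ψ : ℝ → ℝ := fun u => φ t + φ' t * (u - t) + K / 2 * (u - t) ^ 2 - φ u
  have hψ : ∀ u, HasDerivAt ψ (φ' t + K * (u - t) - φ' u) u := fun u => by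
    have h : HasDerivAt (fun u : ℝ => u - t) 1 u := (hasDerivAt_id' u).sub_const t
    exact ((((h.const_mul (φ' t)).const_add (φ t)).add ((h.pow 2).const_mul (K / 2))).sub
      (hφ u)).congr_deriv (by ring)
  have hψt : ψ t = 0 := by simp [ψ]
  suffices 0 ≤ ψ u by simpa [ψ] using this
  have hψc : Continuous ψ := continuous_iff_continuousAt.2 fun u => (hψ u).continuousAt
  rcases le_total t u with htu | hut
  · refine hψt ▸ monotoneOn_of_hasDerivWithinAt_nonneg (convex_Ici t) hψc.continuousOn
      (fun u _ => (hψ u).hasDerivWithinAt) (fun u hu => ?_) self_mem_Ici htu htu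
    rw [interior_Ici] at hu
    linarith [hφ' t u (le_of_lt hu)]
  · refine hψt ▸ antitoneOn_of_hasDerivWithinAt_nonpos (convex_Iic t) hψc.continuousOn
      (fun u _ => (hψ u).hasDerivWithinAt) (fun u hu => ?_) hut self_mem_Iic hut
    rw [interior_Iic] at hu
    linarith [hφ' u t (le_of_lt hu)]

variable (hφ : ∀ t, HasDerivAt φ (φ' t) t) (hφ' : ∀ a b, a ≤ b → φ' b - φ' a ≤ K * (b - a))
  (hK : 0 < K) (hφ₀ : ∀ t, 0 ≤ φ t)
include hφ hφ' hK hφ₀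

theorem sq_deriv_le_of_nonneg (t : ℝ) : φ' t ^ 2 ≤ 2 * K * φ t := by
  have hdesc := le_add_deriv_mul_add_sq_of_deriv_sub_le hφ hφ' t (t - φ' t / K)
  have hstep : φ' t * (t - φ' t / K - t) + K / 2 * (t - φ' t / K - t) ^ 2
      = -(φ' t ^ 2 / (2 * K)) := by
    field_simp; ring
  have : φ' t ^ 2 / (2 * K) ≤ φ t := by linarith [hφ₀ (t - φ' t / K)]
  rwa [div_le_iff₀ (by positivity), mul_comm] at this

theorem sq_sub_le_of_nonneg {s t : ℝ} (hφ0 : K / 2 * s ^ 2 ≤ φ 0) (ht : 0 ≤ t) (hts : t ≤ s) :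
    K / 2 * (s - t) ^ 2 ≤ φ t := by
  by_contra! hlt
  have hgrad := sq_deriv_le_of_nonneg hφ hφ' hK hφ₀ t
  have hback := le_add_deriv_mul_add_sq_of_deriv_sub_le hφ hφ' t 0
  have hst : 0 ≤ K * (s - t) := mul_nonneg hK.le (by linarith)
  have : -φ' t < K * (s - t) := by
    by_contra! h
    nlinarith [mul_self_le_mul_self hst h]
  nlinarith

end DescentLemma

theorem HasGradientAt.hasDerivAt_add_smul {F : Type*} [NormedAddCommGroup F]
    [InnerProductSpace ℝ F] [CompleteSpace F] {f : F → ℝ} {f' w r : F} {t : ℝ}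
    (hf : HasGradientAt f f' (w + t • r)) :
    HasDerivAt (fun t : ℝ => f (w + t • r)) ⟪f', r⟫ t := by
  have hline : HasDerivAt (fun t : ℝ => w + t • r) r t := by
    simpa using ((hasDerivAt_id t).smul_const r).const_add w
  simpa [Function.comp_def] using hf.hasFDerivAt.comp_hasDerivAt t hline

theorem norm_smul_sq_of_norm_eq_one {E : Type*} [SeminormedAddCommGroup E] [NormedSpace ℝ E]
    {r : E} (hr : ‖r‖ = 1) (t : ℝ) : ‖t • r‖ ^ 2 = t ^ 2 := by
  rw [norm_smul, hr, mul_one, Real.norm_eq_abs, sq_abs]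

section AlongLine

variable {E : Type*} [NormedAddCommGroup E] [InnerProductSpace ℝ E]
  {f l : E → ℝ} {f' l' : E → E} {μ L : ℝ} {w r : E}

theorem eq_quadratic_along_line (hlquad : ∀ x y, l x = l y + ⟪l' y, x - y⟫ + μ / 2 * ‖x - y‖ ^ 2)
    (hr : ‖r‖ = 1) (t : ℝ) : l (w + t • r) = l w + ⟪l' w, r⟫ * t + μ / 2 * t ^ 2 := by
  rw [hlquad _ w, add_sub_cancel_left, real_inner_smul_right, norm_smul_sq_of_norm_eq_one hr]
  ring

theorem hasDerivAt_sub_along_line [CompleteSpace E] (hfgrad : ∀ x, HasGradientAt f (f' x) x)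
    (hlquad : ∀ x y, l x = l y + ⟪l' y, x - y⟫ + μ / 2 * ‖x - y‖ ^ 2) (hr : ‖r‖ = 1) (t : ℝ) :
    HasDerivAt (fun t : ℝ => f (w + t • r) - l (w + t • r))
      (⟪f' (w + t • r), r⟫ - (⟪l' w, r⟫ + μ * t)) t := by
  have hl : HasDerivAt (fun t : ℝ => l (w + t • r)) (⟪l' w, r⟫ + μ * t) t := by
    rw [funext (eq_quadratic_along_line hlquad hr)]
    exact ((((hasDerivAt_id' t).const_mul _).const_add _).add
      ((hasDerivAt_pow 2 t).const_mul (μ / 2))).congr_deriv (by norm_num; ring)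
  exact (hfgrad _).hasDerivAt_add_smul.sub hl

theorem inner_sub_along_line_le (hfsmooth : ∀ x y, ‖f' x - f' y‖ ≤ L * ‖x - y‖) (hr : ‖r‖ = 1)
    {a c : ℝ} (hac : a ≤ c) : ⟪f' (w + c • r) - f' (w + a • r), r⟫ ≤ L * (c - a) := by
  have hdist : ‖(w + c • r) - (w + a • r)‖ = c - a := by
    rw [add_sub_add_left_eq_sub, ← sub_smul, norm_smul, hr, mul_one, Real.norm_eq_abs,
      abs_of_nonneg (sub_nonneg.2 hac)]
  calc _ ≤ ‖f' (w + c • r) - f' (w + a • r)‖ * ‖r‖ := real_inner_le_norm _ _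
    _ ≤ L * (c - a) := by rw [hr, mul_one, ← hdist]; exact hfsmooth _ _

theorem sq_sub_le_sub_along_line [CompleteSpace E] (hμL : μ < L) (hfgrad : ∀ x, HasGradientAt f (f' x) x)
    (hfsmooth : ∀ x y, ‖f' x - f' y‖ ≤ L * ‖x - y‖)
    (hlquad : ∀ x y, l x = l y + ⟪l' y, x - y⟫ + μ / 2 * ‖x - y‖ ^ 2) (hle : ∀ x, l x ≤ f x)
    (hr : ‖r‖ = 1) {s t : ℝ} (hs : (L - μ) / 2 * s ^ 2 ≤ f w - l w) (ht : 0 ≤ t) (hts : t ≤ s) :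
    (L - μ) / 2 * (s - t) ^ 2 ≤ f (w + t • r) - l (w + t • r) := by
  refine sq_sub_le_of_nonneg (hasDerivAt_sub_along_line hfgrad hlquad hr) (fun a c hac => ?_)
    (sub_pos.2 hμL) (fun t => sub_nonneg.2 (hle _)) (by simpa using hs) ht hts
  have := inner_sub_along_line_le hfsmooth hr (w := w) hac
  rw [inner_sub_left] at this
  linarith

end AlongLine

theorem tight_bound_lemma_general (d : ℕ) (μ L : ℝ) (hμL : μ < L)
    (f l : EuclideanSpace ℝ (Fin d) → ℝ)
    (f' l' : EuclideanSpace ℝ (Fin d) → EuclideanSpace ℝ (Fin d))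
    (hfgrad : ∀ x, HasGradientAt f (f' x) x)
    (hfsmooth : ∀ x y, ‖f' x - f' y‖ ≤ L * ‖x - y‖)
    (hlquad : ∀ x y, l x = l y + ⟪l' y, x - y⟫ + μ / 2 * ‖x - y‖ ^ 2)
    (hle : ∀ x, l x ≤ f x)
    (w r : EuclideanSpace ℝ (Fin d)) (hr : ‖r‖ = 1)
    (v : EuclideanSpace ℝ (Fin d))
    (hv : v = w + Real.sqrt (2 * (f w - l w) / (L - μ)) • r)
    (b : EuclideanSpace ℝ (Fin d) → ℝ)
    (hb : ∀ x, b x = l v + ⟪l' v, x - v⟫ + L / 2 * ‖x - v‖ ^ 2) :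
    (∀ t : ℝ, 0 ≤ t → t ≤ Real.sqrt (2 * (f w - l w) / (L - μ)) →
      f (w + t • r) ≥ b (w + t • r) ∧
      b (w + t • r) - l (w + t • r) = (L - μ) / 2 * ‖w + t • r - v‖ ^ 2 ∧
      0 ≤ b (w + t • r) - l (w + t • r)) ∧
    f w - l w = (L - μ) / 2 * ‖w - v‖ ^ 2 := by
  set s := Real.sqrt (2 * (f w - l w) / (L - μ)) with hs
  have hs2 : (L - μ) / 2 * s ^ 2 = f w - l w := by
    have hK : 0 < L - μ := sub_pos.2 hμL
    rw [hs, Real.sq_sqrt (div_nonneg (by linarith [hle w]) hK.le)]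
    field_simp
  have hbl : ∀ x, b x - l x = (L - μ) / 2 * ‖x - v‖ ^ 2 := fun x => by
    rw [hb, hlquad x v]; ring
  have hdist : ∀ t : ℝ, ‖w + t • r - v‖ ^ 2 = (s - t) ^ 2 := fun t => by
    rw [hv, add_sub_add_left_eq_sub, ← sub_smul, norm_smul_sq_of_norm_eq_one hr]
    ring
  refine ⟨fun t ht hts => ⟨?_, hbl _, by rw [hbl]; positivity⟩, ?_⟩
  · have hgap := sq_sub_le_sub_along_line hμL hfgrad hfsmooth hlquad hle hr hs2.le ht hts
    have hbt := hbl (w + t • r)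
    rw [hdist] at hbt
    linarith
  · have hw := hdist 0
    rw [zero_smul, add_zero, sub_zero] at hw
    rw [hw, hs2]

theorem tight_bound_lemma (d : ℕ) (μ L : ℝ) (hμ : 0 < μ) (hμL : μ < L)
    (f l : EuclideanSpace ℝ (Fin d) → ℝ)
    (f' l' : EuclideanSpace ℝ (Fin d) → EuclideanSpace ℝ (Fin d))
    (hfgrad : ∀ x, HasGradientAt f (f' x) x)
    (hlgrad : ∀ x, HasGradientAt l (l' x) x)
    (hfsmooth : ∀ x y, ‖f' x - f' y‖ ≤ L * ‖x - y‖)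
    (hfsc : ∀ x y, f x ≥ f y + ⟪f' y, x - y⟫ + μ / 2 * ‖x - y‖ ^ 2)
    (hlquad : ∀ x y, l x = l y + ⟪l' y, x - y⟫ + μ / 2 * ‖x - y‖ ^ 2)
    (hle : ∀ x, l x ≤ f x)
    (w r : EuclideanSpace ℝ (Fin d)) (hr : ‖r‖ = 1)
    (v : EuclideanSpace ℝ (Fin d))
    (hv : v = w + Real.sqrt (2 * (f w - l w) / (L - μ)) • r)
    (b : EuclideanSpace ℝ (Fin d) → ℝ)
    (hb : ∀ x, b x = l v + ⟪l' v, x - v⟫ + L / 2 * ‖x - v‖ ^ 2) :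
    (∀ t : ℝ, 0 ≤ t → t ≤ Real.sqrt (2 * (f w - l w) / (L - μ)) →
      f (w + t • r) ≥ b (w + t • r) ∧
      b (w + t • r) - l (w + t • r) = (L - μ) / 2 * ‖w + t • r - v‖ ^ 2 ∧
      0 ≤ b (w + t • r) - l (w + t • r)) ∧
    f w - l w = (L - μ) / 2 * ‖w - v‖ ^ 2 :=
  tight_bound_lemma_general d μ L hμL f l f' l' hfgrad hfsmooth hlquad hle w r hr v hv b hb
end

section
/- Let f(x) = (1/n)∑_{i=1}^n f_i(x) where each f_i : ℝ^d → ℝ is differentiable, L-smooth and μ-strongly convex with 0 < μ < L. Then for all x, y ∈ ℝ^d: ⟨∇f(x), y − x⟩ ≤ ((L − μ)/L)[f(y) − f(x)] − (μ/2)‖y − x‖² − (1/(2Ln))∑_{i=1}^n ‖∇f_i(y) − ∇f_i(x)‖² − (μ/L)⟨∇f(y), x − y⟩. -/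
/-!
Write `hᵢ = fᵢ - (μ/2)‖·‖²`. Strong convexity of `fᵢ` says that `hᵢ` lies above its tangent
planes, and `L`-Lipschitz continuity of `∇fᵢ` that it lies below its tangent paraboloids of
curvature `L - μ`. Comparing `hᵢ` at `x` and `y` with its value at the gradient step
`y - (∇hᵢ y - ∇hᵢ x) / (L - μ)` then gives
`hᵢ y ≥ hᵢ x + ⟪∇hᵢ x, y - x⟫ + ‖∇hᵢ y - ∇hᵢ x‖² / (2 (L - μ))`.
Expanded back in terms of `fᵢ` this is the claimed inequality for a single `fᵢ`, and averaging
over `i` gives the theorem.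
-/

open scoped RealInnerProductSpace
open Set

theorem le_add_deriv_add_of_deriv_le_add_mul {φ φ' : ℝ → ℝ} {C : ℝ}
    (hφ : ∀ t ∈ Icc (0 : ℝ) 1, HasDerivAt φ (φ' t) t)
    (hφ' : ∀ t ∈ Ico (0 : ℝ) 1, φ' t ≤ φ' 0 + C * t) :
    φ 1 ≤ φ 0 + φ' 0 + C / 2 := by
  have hB : ∀ t, HasDerivAt (fun t => φ 0 + t * φ' 0 + C / 2 * t ^ 2) (φ' 0 + C * t) t := by
    intro t
    have := (((hasDerivAt_id t).mul_const (φ' 0)).const_add (φ 0)).add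
      ((hasDerivAt_pow 2 t).const_mul (C / 2))
    exact this.congr_deriv (by norm_num; ring)
  have := image_le_of_deriv_right_le_deriv_boundary (HasDerivAt.continuousOn hφ)
    (fun t ht => (hφ t (Ico_subset_Icc_self ht)).hasDerivWithinAt) (by simp)
    (HasDerivAt.continuousOn fun t _ => hB t) (fun t _ => (hB t).hasDerivWithinAt) hφ'
    (right_mem_Icc.2 zero_le_one)
  simpa using this

section InnerProductSpace

variable {E : Type*} [NormedAddCommGroup E] [InnerProductSpace ℝ E]

theorem le_add_inner_add_of_gradient_lipschitz [CompleteSpace E] {f : E → ℝ} {f' : E → E}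
    {L : ℝ} (hf : ∀ x, HasGradientAt f (f' x) x) (hlip : ∀ a b, ‖f' a - f' b‖ ≤ L * ‖a - b‖)
    (a b : E) : f b ≤ f a + ⟪f' a, b - a⟫ + L / 2 * ‖b - a‖ ^ 2 := by
  set v := b - a
  have hline : ∀ t : ℝ, HasDerivAt (fun t : ℝ => f (a + t • v)) ⟪f' (a + t • v), v⟫ t := by
    intro t
    have := ((hasDerivAt_id t).smul_const v).const_add a
    simp only [id, one_smul] at this
    exact (hf _).hasFDerivAt.comp_hasDerivAt t this
  have hslope : ∀ t ∈ Ico (0 : ℝ) 1,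
      ⟪f' (a + t • v), v⟫ ≤ ⟪f' (a + (0 : ℝ) • v), v⟫ + L * ‖v‖ ^ 2 * t := by
    intro t ht
    rw [zero_smul, add_zero]
    calc ⟪f' (a + t • v), v⟫ = ⟪f' a, v⟫ + ⟪f' (a + t • v) - f' a, v⟫ := by
          rw [inner_sub_left]; ring
      _ ≤ ⟪f' a, v⟫ + ‖f' (a + t • v) - f' a‖ * ‖v‖ := by
          gcongr; exact real_inner_le_norm _ _
      _ ≤ ⟪f' a, v⟫ + L * ‖t • v‖ * ‖v‖ := by
          gcongr; simpa using hlip (a + t • v) a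
      _ = ⟪f' a, v⟫ + L * ‖v‖ ^ 2 * t := by
          rw [norm_smul, Real.norm_of_nonneg ht.1]; ring
  have := le_add_deriv_add_of_deriv_le_add_mul (fun t _ => hline t) hslope
  simp only [zero_smul, add_zero, one_smul] at this
  rwa [add_sub_cancel, mul_div_right_comm] at this

theorem norm_sq_sub_norm_sq_sub_two_inner (a b : E) :
    ‖b‖ ^ 2 - ‖a‖ ^ 2 - 2 * ⟪a, b - a⟫ = ‖b - a‖ ^ 2 := by
  rw [norm_sub_sq_real, inner_sub_right, real_inner_self_eq_norm_sq, real_inner_comm]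
  ring

theorem add_inner_add_norm_sq_div_le_of_convex {h : E → ℝ} {h' : E → E} {K : ℝ} (hK : 0 < K)
    (hconv : ∀ a b, h a + ⟪h' a, b - a⟫ ≤ h b)
    (hupper : ∀ a b, h b ≤ h a + ⟪h' a, b - a⟫ + K / 2 * ‖b - a‖ ^ 2) (x y : E) :
    h x + ⟪h' x, y - x⟫ + ‖h' y - h' x‖ ^ 2 / (2 * K) ≤ h y := by
  set g := h' y - h' x
  have hlow := hconv x (y - K⁻¹ • g)
  have hup := hupper y (y - K⁻¹ • g)
  have e1 : y - K⁻¹ • g - x = (y - x) - K⁻¹ • g := by abel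
  have e2 : y - K⁻¹ • g - y = -(K⁻¹ • g) := by abel
  rw [e1, inner_sub_right, real_inner_smul_right] at hlow
  rw [e2, inner_neg_right, real_inner_smul_right, norm_neg, norm_smul, Real.norm_eq_abs,
    abs_of_pos (inv_pos.2 hK)] at hup
  have hg : K⁻¹ * ⟪h' y, g⟫ - K⁻¹ * ⟪h' x, g⟫ = K⁻¹ * ‖g‖ ^ 2 := by
    rw [← mul_sub, ← inner_sub_left, real_inner_self_eq_norm_sq]
  have hK2 : K / 2 * (K⁻¹ * ‖g‖) ^ 2 = ‖g‖ ^ 2 / (2 * K) := by field_simp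
  have hK1 : K⁻¹ * ‖g‖ ^ 2 = 2 * (‖g‖ ^ 2 / (2 * K)) := by field_simp
  linarith

theorem add_inner_add_norm_sq_div_le_of_strongly_convex {f : E → ℝ} {f' : E → E} {μ L : ℝ}
    (hμL : μ < L) (hsc : ∀ a b, f a ≥ f b + ⟪f' b, a - b⟫ + μ / 2 * ‖a - b‖ ^ 2)
    (hupper : ∀ a b, f b ≤ f a + ⟪f' a, b - a⟫ + L / 2 * ‖b - a‖ ^ 2) (x y : E) :
    f x + ⟪f' x, y - x⟫ + μ / 2 * ‖y - x‖ ^ 2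
      + ‖f' y - f' x - μ • (y - x)‖ ^ 2 / (2 * (L - μ)) ≤ f y := by
  have hshift : ∀ a b, f b - μ / 2 * ‖b‖ ^ 2 - (f a - μ / 2 * ‖a‖ ^ 2 + ⟪f' a - μ • a, b - a⟫)
      = f b - (f a + ⟪f' a, b - a⟫ + μ / 2 * ‖b - a‖ ^ 2) := by
    intro a b
    rw [← norm_sq_sub_norm_sq_sub_two_inner a b, inner_sub_left, real_inner_smul_left]
    ring
  have key := add_inner_add_norm_sq_div_le_of_convex (h := fun z => f z - μ / 2 * ‖z‖ ^ 2)
    (h' := fun z => f' z - μ • z) (sub_pos.2 hμL)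
    (fun a b => by linarith [hshift a b, hsc b a])
    (fun a b => by linarith [hshift a b, hupper a b]) x y
  have hg : f' y - μ • y - (f' x - μ • x) = f' y - f' x - μ • (y - x) := by
    rw [smul_sub]; abel
  simp only [hg] at key
  linarith [hshift x y]

theorem inner_le_of_strongly_convex_of_upper_bound {f : E → ℝ} {f' : E → E} {μ L : ℝ}
    (hL : 0 < L) (hμL : μ < L) (hsc : ∀ a b, f a ≥ f b + ⟪f' b, a - b⟫ + μ / 2 * ‖a - b‖ ^ 2)
    (hupper : ∀ a b, f b ≤ f a + ⟪f' a, b - a⟫ + L / 2 * ‖b - a‖ ^ 2) (x y : E) :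
    ⟪f' x, y - x⟫ ≤ (L - μ) / L * (f y - f x) - μ / 2 * ‖y - x‖ ^ 2
      - 1 / (2 * L) * ‖f' y - f' x‖ ^ 2 - μ / L * ⟪f' y, x - y⟫ := by
  have hLμ : 0 < L - μ := sub_pos.2 hμL
  have key := add_inner_add_norm_sq_div_le_of_strongly_convex hμL hsc hupper x y
  have hexpand : ‖f' y - f' x - μ • (y - x)‖ ^ 2 = ‖f' y - f' x‖ ^ 2
      - 2 * μ * (⟪f' y, y - x⟫ - ⟪f' x, y - x⟫) + μ ^ 2 * ‖y - x‖ ^ 2 := by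
    rw [norm_sub_sq_real, real_inner_smul_right, norm_smul, inner_sub_left, Real.norm_eq_abs,
      mul_pow, sq_abs]
    ring
  have hswap : ⟪f' y, x - y⟫ = -⟪f' y, y - x⟫ := by rw [← inner_neg_right, neg_sub]
  rw [hexpand] at key
  rw [hswap]
  -- cleared of denominators, the goal is a positive multiple of `key` up to a ring identity
  field_simp at key ⊢
  linarith

end InnerProductSpace

theorem saga_inner_product_bound (d n : ℕ) (hn : 1 ≤ n) (μ L : ℝ)
    (hμ : 0 < μ) (hμL : μ < L)
    (f : Fin n → EuclideanSpace ℝ (Fin d) → ℝ)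
    (f' : Fin n → EuclideanSpace ℝ (Fin d) → EuclideanSpace ℝ (Fin d))
    (hgrad : ∀ i x, HasGradientAt (f i) (f' i x) x)
    (hsmooth : ∀ i x y, ‖f' i x - f' i y‖ ≤ L * ‖x - y‖)
    (hsc : ∀ i x y, f i x ≥ f i y + ⟪f' i y, x - y⟫ + μ / 2 * ‖x - y‖ ^ 2)
    (x y : EuclideanSpace ℝ (Fin d)) :
    ⟪(1 / (n : ℝ)) • ∑ i, f' i x, y - x⟫ ≤
      (L - μ) / L * ((1 / (n : ℝ)) * ∑ i, f i y - (1 / (n : ℝ)) * ∑ i, f i x)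
      - μ / 2 * ‖y - x‖ ^ 2
      - (1 / (2 * L * n)) * ∑ i, ‖f' i y - f' i x‖ ^ 2
      - μ / L * ⟪(1 / (n : ℝ)) • ∑ i, f' i y, x - y⟫ := by
  have hL : 0 < L := hμ.trans hμL
  have hn' : (n : ℝ) ≠ 0 := Nat.cast_ne_zero.2 (Nat.one_le_iff_ne_zero.1 hn)
  calc ⟪(1 / (n : ℝ)) • ∑ i, f' i x, y - x⟫ = 1 / n * ∑ i, ⟪f' i x, y - x⟫ := by
        rw [real_inner_smul_left, sum_inner]
    _ ≤ 1 / n * ∑ i, ((L - μ) / L * (f i y - f i x) - μ / 2 * ‖y - x‖ ^ 2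
          - 1 / (2 * L) * ‖f' i y - f' i x‖ ^ 2 - μ / L * ⟪f' i y, x - y⟫) := by
        gcongr with i
        exact inner_le_of_strongly_convex_of_upper_bound hL hμL (hsc i)
          (le_add_inner_add_of_gradient_lipschitz (hgrad i) (hsmooth i)) x y
    _ = _ := by
        simp only [real_inner_smul_left, sum_inner, Finset.sum_sub_distrib, ← Finset.mul_sum,
          Finset.sum_const, Finset.card_univ, Fintype.card_fin, nsmul_eq_mul]
        field_simp
end

section
/- Let f(x) = (1/n)∑_{i=1}^n f_i(x) with each f_i : ℝ^d → ℝ differentiable, and for a point x ∈ ℝ^d, a table φ_1, …, φ_n ∈ ℝ^d and a step size γ > 0 define w^(j) = x − γ[∇f_j(x) − ∇f_j(φ_j) + (1/n)∑_i ∇f_i(φ_i)] for each j. Then for every y ∈ ℝ^d and every β > 0: (1/n)∑_{j=1}^n ‖w^(j) − x + γ∇f(y)‖² ≤ γ²(1 + β⁻¹)(1/n)∑_{j=1}^n ‖∇f_j(φ_j) − ∇f_j(y)‖² + γ²(1 + β)(1/n)∑_{j=1}^n ‖∇f_j(x) − ∇f_j(y)‖² − γ²β‖∇f(x) − ∇f(y)‖².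 -/
/-!
Write `a j = ∇f_j(x) - ∇f_j(y)` and `b j = ∇f_j(φ_j) - ∇f_j(y)`, with means `aMean`, `bMean`. Then
`w^(j) - x + γ∇f(y) = -γ (a j - b j + bMean)`, a family whose mean is `aMean`. Splitting off the mean
(`E‖v‖² = E‖v - Ev‖² + ‖Ev‖²`) leaves the centred part `(a j - aMean) - (b j - bMean)`, which Young's
inequality `‖u + v‖² ≤ (1 + β)‖u‖² + (1 + β⁻¹)‖v‖²` splits into the variances of `a` and `b`;
dropping `-(1 + β⁻¹)‖bMean‖²` gives the bound.
-/

open scoped RealInnerProductSpace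
open Finset

section
variable {ι E : Type*} [Fintype ι] [NormedAddCommGroup E] [InnerProductSpace ℝ E]

lemma norm_add_sq_le_of_pos {β : ℝ} (hβ : 0 < β) (u v : E) :
    ‖u + v‖ ^ 2 ≤ (1 + β) * ‖u‖ ^ 2 + (1 + β⁻¹) * ‖v‖ ^ 2 := by
  have hinner : 2 * ⟪u, v⟫ ≤ β * ‖u‖ ^ 2 + β⁻¹ * ‖v‖ ^ 2 := by
    have hsq : 0 ≤ β⁻¹ * (β * ‖u‖ - ‖v‖) ^ 2 := by positivity
    have hcancel : β⁻¹ * β = 1 := inv_mul_cancel₀ hβ.ne'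
    nlinarith [real_inner_le_norm u v]
  rw [norm_add_sq_real]
  linarith

lemma mean_norm_sq_eq_mean_norm_sub_mean_sq_add (v : ι → E) :
    (Fintype.card ι : ℝ)⁻¹ * ∑ i, ‖v i‖ ^ 2
      = (Fintype.card ι : ℝ)⁻¹ * ∑ i, ‖v i - (Fintype.card ι : ℝ)⁻¹ • ∑ j, v j‖ ^ 2
        + ‖(Fintype.card ι : ℝ)⁻¹ • ∑ j, v j‖ ^ 2 := by
  set N := (Fintype.card ι : ℝ)
  set m : E := N⁻¹ • ∑ j, v j
  have hcross : N⁻¹ * ∑ i, ⟪v i, m⟫ = ‖m‖ ^ 2 := by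
    rw [← sum_inner, ← real_inner_smul_left, real_inner_self_eq_norm_sq]
  have hconst : N⁻¹ * (N * ‖m‖ ^ 2) = ‖m‖ ^ 2 := by
    rcases eq_or_ne N 0 with hN | hN
    · simp [m, hN]
    · field_simp
  simp only [norm_sub_sq_real, sum_add_distrib, sum_sub_distrib, ← mul_sum, sum_const,
    card_univ, nsmul_eq_mul]
  linear_combination 2 * hcross - hconst

lemma mean_norm_sub_add_mean_sq_le {β : ℝ} (hβ : 0 < β) (a b : ι → E) :
    (Fintype.card ι : ℝ)⁻¹ * ∑ j, ‖a j - b j + (Fintype.card ι : ℝ)⁻¹ • ∑ i, b i‖ ^ 2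
      ≤ (1 + β⁻¹) * ((Fintype.card ι : ℝ)⁻¹ * ∑ j, ‖b j‖ ^ 2)
        + (1 + β) * ((Fintype.card ι : ℝ)⁻¹ * ∑ j, ‖a j‖ ^ 2)
        - β * ‖(Fintype.card ι : ℝ)⁻¹ • ∑ i, a i‖ ^ 2 := by
  rcases isEmpty_or_nonempty ι with hι | hι
  · simp
  have hv := mean_norm_sq_eq_mean_norm_sub_mean_sq_add
    fun j => a j - b j + (Fintype.card ι : ℝ)⁻¹ • ∑ i, b i
  have ha := mean_norm_sq_eq_mean_norm_sub_mean_sq_add a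
  have hb := mean_norm_sq_eq_mean_norm_sub_mean_sq_add b
  set N := (Fintype.card ι : ℝ) with hN_def
  have hN : N ≠ 0 := by positivity
  set aMean : E := N⁻¹ • ∑ i, a i
  set bMean : E := N⁻¹ • ∑ i, b i
  have hmean : N⁻¹ • ∑ j, (a j - b j + bMean) = aMean := by
    simp only [sum_add_distrib, sum_sub_distrib, sum_const, card_univ, ← Nat.cast_smul_eq_nsmul ℝ,
      smul_add, smul_sub, aMean]
    rw [← hN_def, inv_smul_smul₀ hN]
    abel
  have hcentred : ∀ j, a j - b j + bMean - aMean = (a j - aMean) + (bMean - b j) :=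
    fun j => by abel
  have hyoung : N⁻¹ * ∑ j, ‖(a j - aMean) + (bMean - b j)‖ ^ 2
      ≤ (1 + β) * (N⁻¹ * ∑ j, ‖a j - aMean‖ ^ 2) + (1 + β⁻¹) * (N⁻¹ * ∑ j, ‖b j - bMean‖ ^ 2) := by
    simp only [mul_left_comm _ N⁻¹, ← mul_add, mul_sum, ← sum_add_distrib]
    gcongr
    rw [norm_sub_rev (b _)]
    exact norm_add_sq_le_of_pos hβ _ _
  simp only [hmean, hcentred] at hv
  have hbMean : 0 ≤ (1 + β⁻¹) * ‖bMean‖ ^ 2 := by positivity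
  linear_combination hv + hyoung - (1 + β) * ha - (1 + β⁻¹) * hb + hbMean

end

theorem saga_error_bound_general (d n : ℕ) (γ β : ℝ)
    (hβ : 0 < β)
    (f' : Fin n → EuclideanSpace ℝ (Fin d) → EuclideanSpace ℝ (Fin d))
    (x y : EuclideanSpace ℝ (Fin d)) (φ : Fin n → EuclideanSpace ℝ (Fin d)) :
    (1 / (n : ℝ)) * ∑ j,
        ‖(x - γ • (f' j x - f' j (φ j) + (1 / (n : ℝ)) • ∑ i, f' i (φ i))) - x
            + γ • ((1 / (n : ℝ)) • ∑ i, f' i y)‖ ^ 2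
      ≤ γ ^ 2 * (1 + β⁻¹) * ((1 / (n : ℝ)) * ∑ j, ‖f' j (φ j) - f' j y‖ ^ 2)
        + γ ^ 2 * (1 + β) * ((1 / (n : ℝ)) * ∑ j, ‖f' j x - f' j y‖ ^ 2)
        - γ ^ 2 * β * ‖(1 / (n : ℝ)) • ∑ i, f' i x - (1 / (n : ℝ)) • ∑ i, f' i y‖ ^ 2 := by
  set a := fun j => f' j x - f' j y
  set b := fun j => f' j (φ j) - f' j y
  have hupdate : ∀ j, (x - γ • (f' j x - f' j (φ j) + (1 / (n : ℝ)) • ∑ i, f' i (φ i))) - x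
      + γ • ((1 / (n : ℝ)) • ∑ i, f' i y) = -(γ • (a j - b j + (1 / (n : ℝ)) • ∑ i, b i)) :=
    fun j => by simp only [a, b, sum_sub_distrib]; module
  have hmean_a : (1 / (n : ℝ)) • ∑ i, f' i x - (1 / (n : ℝ)) • ∑ i, f' i y
      = (1 / (n : ℝ)) • ∑ i, a i := by simp only [a, sum_sub_distrib, smul_sub]
  have hbound := mul_le_mul_of_nonneg_left (mean_norm_sub_add_mean_sq_le hβ a b) (sq_nonneg γ)
  simp only [Fintype.card_fin] at hbound
  simp only [hupdate, hmean_a]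
  simp only [norm_neg, norm_smul γ, mul_pow, Real.norm_eq_abs, sq_abs, ← mul_sum, one_div]
  linear_combination hbound

theorem saga_error_bound (d n : ℕ) (hn : 1 ≤ n) (γ β : ℝ)
    (hγ : 0 < γ) (hβ : 0 < β)
    (f : Fin n → EuclideanSpace ℝ (Fin d) → ℝ)
    (f' : Fin n → EuclideanSpace ℝ (Fin d) → EuclideanSpace ℝ (Fin d))
    (hgrad : ∀ i x, HasGradientAt (f i) (f' i x) x)
    (x y : EuclideanSpace ℝ (Fin d)) (φ : Fin n → EuclideanSpace ℝ (Fin d)) :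
    (1 / (n : ℝ)) * ∑ j,
        ‖(x - γ • (f' j x - f' j (φ j) + (1 / (n : ℝ)) • ∑ i, f' i (φ i))) - x
            + γ • ((1 / (n : ℝ)) • ∑ i, f' i y)‖ ^ 2
      ≤ γ ^ 2 * (1 + β⁻¹) * ((1 / (n : ℝ)) * ∑ j, ‖f' j (φ j) - f' j y‖ ^ 2)
        + γ ^ 2 * (1 + β) * ((1 / (n : ℝ)) * ∑ j, ‖f' j x - f' j y‖ ^ 2)
        - γ ^ 2 * β * ‖(1 / (n : ℝ)) • ∑ i, f' i x - (1 / (n : ℝ)) • ∑ i, f' i y‖ ^ 2 :=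
  saga_error_bound_general d n γ β hβ f' x y φ
end

section
/- Under the SAGA setup with γ ≤ 1/L, fix the iterate x and the table φ_1, …, φ_n, and for each index j let Δ_j = −(1/γ)(w^(j) − x) − ∇f(x) and let x^(j) be the proximal point of the SAGA update with index j. Then (1/n)∑_{j=1}^n ‖x^(j) − x*‖² ≤ ‖x − x*‖² − 2γ · (1/n)∑_{j=1}^n [F(x^(j)) − F(x*)] + 2γ² · (1/n)∑_{j=1}^n ‖Δ_j‖². -/
/-!
Each SAGA step is a proximal gradient step for `F = f + h` whose gradient `∇f(x)` is perturbed
by `Δ_j`. Since `(w - p)/γ` is a subgradient of `h` at the proximal point `p` of `w`, convexity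
of `f` at `x` and the descent lemma (with `γL ≤ 1`) give, for every `z`,
`‖x^(j) - z‖² ≤ ‖x - z‖² - 2γ (F(x^(j)) - F(z)) + 2 ⟪-γΔ_j, x^(j) - z⟫`.
The perturbations `Δ_j` average to zero and `I - prox` is monotone, so averaging the cross term
over `j` bounds it by `(1/n) ∑ ‖γΔ_j‖²`.
-/

open scoped RealInnerProductSpace

/-- The SAGA pre-proximal point `w^(j)` for iterate `x`, table `φ` and index `j`. -/
noncomputable def sagaW (d n : ℕ) (γ : ℝ)
    (f' : Fin n → EuclideanSpace ℝ (Fin d) → EuclideanSpace ℝ (Fin d))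
    (x : EuclideanSpace ℝ (Fin d)) (φ : Fin n → EuclideanSpace ℝ (Fin d))
    (j : Fin n) : EuclideanSpace ℝ (Fin d) :=
  x - γ • (f' j x - f' j (φ j) + (1 / (n : ℝ)) • ∑ i, f' i (φ i))

open Set Filter Topology

variable {E : Type*} [NormedAddCommGroup E]

theorem le_of_forall_mem_Ioc_le_add_mul {a b c : ℝ} (h : ∀ t ∈ Ioc (0 : ℝ) 1, a ≤ b + t * c) :
    a ≤ b := by
  have hcont : Continuous fun t : ℝ => b + t * c := by fun_prop
  have hlim : Tendsto (fun t : ℝ => b + t * c) (𝓝[>] 0) (𝓝 b) :=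
    (hcont.tendsto' 0 b (by simp)).mono_left nhdsWithin_le_nhds
  exact ge_of_tendsto hlim (by filter_upwards [Ioc_mem_nhdsGT zero_lt_one] using h)

def IsProxPoint (h : E → ℝ) (γ : ℝ) (w p : E) : Prop :=
  ∀ y, h p + 1 / (2 * γ) * ‖p - w‖ ^ 2 ≤ h y + 1 / (2 * γ) * ‖y - w‖ ^ 2

theorem IsProxPoint.two_mul_add_norm_sq_le {h : E → ℝ} {γ : ℝ} {w p : E}
    (hp : IsProxPoint h γ w p) (hγ : 0 < γ) (y : E) :
    2 * γ * h p + ‖p - w‖ ^ 2 ≤ 2 * γ * h y + ‖y - w‖ ^ 2 := by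
  have h2γ : 2 * γ * (1 / (2 * γ)) = 1 := mul_one_div_cancel (by positivity)
  have := mul_le_mul_of_nonneg_left (hp y) (by positivity : (0 : ℝ) ≤ 2 * γ)
  rwa [mul_add, mul_add, ← mul_assoc, ← mul_assoc, h2γ, one_mul, one_mul] at this

variable [InnerProductSpace ℝ E]

theorem sum_inner_nonneg_of_pairwise {ι : Type*} [Fintype ι] {a b : ι → E}
    (ha : ∑ i, a i = 0) (hab : ∀ i j, 0 ≤ ⟪a i - a j, b i - b j⟫) :
    0 ≤ ∑ i, ⟪a i, b i⟫ := by
  have hexpand : ∑ i, ∑ j, ⟪a i - a j, b i - b j⟫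
      = 2 * Fintype.card ι * ∑ i, ⟪a i, b i⟫ - 2 * ⟪∑ i, a i, ∑ j, b j⟫ := by
    simp only [inner_sub_left, inner_sub_right, Finset.sum_sub_distrib, ← inner_sum, ← sum_inner,
      Finset.sum_const, Finset.card_univ, ← Nat.cast_smul_eq_nsmul ℝ, real_inner_smul_right,
      smul_eq_mul, ← Finset.mul_sum]
    ring
  rw [ha, inner_zero_left, mul_zero, sub_zero] at hexpand
  have hsum := hexpand ▸ Fintype.sum_nonneg fun i => Fintype.sum_nonneg (hab i)
  rcases isEmpty_or_nonempty ι with _ | _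
  · simp
  · exact nonneg_of_mul_nonneg_right (by linarith) (by positivity : (0 : ℝ) < 2 * Fintype.card ι)

namespace IsProxPoint

variable {h : E → ℝ} {γ : ℝ}

/-- `(w - p) / γ` is a subgradient of `h` at `p`. -/
theorem inner_sub_le {w p : E} (hp : IsProxPoint h γ w p) (hh : ConvexOn ℝ univ h) (hγ : 0 < γ)
    (y : E) : ⟪w - p, y - p⟫ ≤ γ * (h y - h p) := by
  refine le_of_forall_mem_Ioc_le_add_mul (c := ‖y - p‖ ^ 2 / 2) fun t ⟨ht0, ht1⟩ => ?_
  have hmin := hp.two_mul_add_norm_sq_le hγ (p + t • (y - p))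
  have hconv : h (p + t • (y - p)) ≤ (1 - t) * h p + t * h y := by
    rw [show p + t • (y - p) = (1 - t) • p + t • y by module]
    exact hh.2 (mem_univ p) (mem_univ y) (sub_nonneg.2 ht1) ht0.le (sub_add_cancel 1 t)
  have hsq : ‖p + t • (y - p) - w‖ ^ 2
      = ‖p - w‖ ^ 2 - 2 * t * ⟪w - p, y - p⟫ + t ^ 2 * ‖y - p‖ ^ 2 := by
    rw [show p + t • (y - p) - w = (p - w) + t • (y - p) by abel, norm_add_sq_real,
      real_inner_smul_right, norm_smul, mul_pow, Real.norm_eq_abs, sq_abs,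
      ← neg_sub w p, inner_neg_left]
    ring
  have hscaled : 0 ≤ t * (γ * (h y - h p) + t * (‖y - p‖ ^ 2 / 2) - ⟪w - p, y - p⟫) := by
    rw [hsq] at hmin
    linarith [mul_le_mul_of_nonneg_left hconv (by positivity : (0 : ℝ) ≤ 2 * γ)]
  linarith [(mul_nonneg_iff_of_pos_left ht0).mp hscaled]

theorem inner_sub_sub_nonneg {w₁ w₂ p₁ p₂ : E} (hp₁ : IsProxPoint h γ w₁ p₁)
    (hp₂ : IsProxPoint h γ w₂ p₂) (hh : ConvexOn ℝ univ h) (hγ : 0 < γ) :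
    0 ≤ ⟪w₁ - w₂, (w₁ - p₁) - (w₂ - p₂)⟫ := by
  have h₁ := hp₁.inner_sub_le hh hγ p₂
  have h₂ := hp₂.inner_sub_le hh hγ p₁
  have hsplit : w₁ - w₂ = (p₁ - p₂) + ((w₁ - p₁) - (w₂ - p₂)) := by abel
  rw [hsplit, inner_add_left, real_inner_self_eq_norm_sq]
  have hmono : ⟪p₁ - p₂, (w₁ - p₁) - (w₂ - p₂)⟫ = -⟪w₁ - p₁, p₂ - p₁⟫ - ⟪w₂ - p₂, p₁ - p₂⟫ := by
    rw [inner_sub_right, real_inner_comm, real_inner_comm (w₂ - p₂), ← neg_sub p₂ p₁,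
      inner_neg_right]
  linarith [sq_nonneg ‖(w₁ - p₁) - (w₂ - p₂)‖]

theorem sum_inner_sub_le {ι : Type*} [Fintype ι] {w p : ι → E}
    {u : E} (hp : ∀ i, IsProxPoint h γ (w i) (p i)) (hh : ConvexOn ℝ univ h) (hγ : 0 < γ)
    (hw : ∑ i, (w i - u) = 0) (z : E) :
    ∑ i, ⟪w i - u, p i - z⟫ ≤ ∑ i, ‖w i - u‖ ^ 2 := by
  have hcov : 0 ≤ ∑ i, ⟪w i - u, w i - p i⟫ :=
    sum_inner_nonneg_of_pairwise hw fun i j => by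
      rw [sub_sub_sub_cancel_right]
      exact (hp i).inner_sub_sub_nonneg (hp j) hh hγ
  have hsplit : ∀ i, ⟪w i - u, p i - z⟫
      = ⟪w i - u, u - z⟫ + ‖w i - u‖ ^ 2 - ⟪w i - u, w i - p i⟫ := by
    intro i
    rw [← real_inner_self_eq_norm_sq, ← inner_add_right, ← inner_sub_right]
    congr 1
    abel
  simp only [hsplit, Finset.sum_sub_distrib, Finset.sum_add_distrib, ← sum_inner, hw,
    inner_zero_left, zero_add]
  linarith

end IsProxPoint

theorem ConvexOn.fun_sum {ι : Type*} {s : Finset ι} {t : Set E} {g : ι → E → ℝ}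
    (ht : Convex ℝ t) (hg : ∀ i ∈ s, ConvexOn ℝ t (g i)) :
    ConvexOn ℝ t (fun y => ∑ i ∈ s, g i y) := by
  induction s using Finset.cons_induction with
  | empty => simpa using convexOn_const 0 ht
  | cons i s _ ih =>
    simp_rw [Finset.sum_cons]
    exact (hg i (Finset.mem_cons_self i s)).add (ih fun j hj => hg j (Finset.mem_cons_of_mem hj))

theorem norm_average_sub_le {n : ℕ} (hn : n ≠ 0) {g' : Fin n → E → E} {L : ℝ}
    (hg' : ∀ i a b, ‖g' i a - g' i b‖ ≤ L * ‖a - b‖) (a b : E) :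
    ‖(1 / (n : ℝ)) • ∑ i, g' i a - (1 / (n : ℝ)) • ∑ i, g' i b‖ ≤ L * ‖a - b‖ := by
  have hn' : (n : ℝ) ≠ 0 := Nat.cast_ne_zero.2 hn
  rw [← smul_sub, ← Finset.sum_sub_distrib, norm_smul, Real.norm_of_nonneg (by positivity)]
  calc 1 / (n : ℝ) * ‖∑ i, (g' i a - g' i b)‖ ≤ 1 / (n : ℝ) * ∑ i : Fin n, L * ‖a - b‖ := by
        gcongr
        exact (norm_sum_le _ _).trans (Finset.sum_le_sum fun i _ => hg' i a b)
    _ = L * ‖a - b‖ := by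
        rw [Finset.sum_const, Finset.card_univ, Fintype.card_fin, nsmul_eq_mul]
        field_simp

section Gradient

variable [CompleteSpace E] {g : E → ℝ} {g₀ : E}

theorem HasGradientAt.const_mul {x : E} (c : ℝ) (hg : HasGradientAt g g₀ x) :
    HasGradientAt (fun y => c * g y) (c • g₀) x := by
  rw [hasGradientAt_iff_hasFDerivAt, map_smul]
  exact hg.hasFDerivAt.const_mul c

theorem HasGradientAt.fun_sum {ι : Type*} {s : Finset ι} {f : ι → E → ℝ} {f₀ : ι → E} {x : E}
    (hf : ∀ i ∈ s, HasGradientAt (f i) (f₀ i) x) :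
    HasGradientAt (fun y => ∑ i ∈ s, f i y) (∑ i ∈ s, f₀ i) x := by
  rw [hasGradientAt_iff_hasFDerivAt, map_sum]
  exact HasFDerivAt.fun_sum fun i hi => (hf i hi).hasFDerivAt

theorem HasGradientAt.hasDerivAt_add_smul_s10 {x v : E} {t : ℝ} (hg : HasGradientAt g g₀ (x + t • v)) :
    HasDerivAt (fun s : ℝ => g (x + s • v)) ⟪g₀, v⟫ t := by
  have hline : HasDerivAt (fun s : ℝ => x + s • v) v t := by
    simpa using ((hasDerivAt_id t).smul_const v).const_add x
  exact hg.hasFDerivAt.comp_hasDerivAt t hline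

theorem ConvexOn.inner_gradient_le {x : E} (hc : ConvexOn ℝ univ g)
    (hg : HasGradientAt g g₀ x) (y : E) : ⟪g₀, y - x⟫ ≤ g y - g x := by
  have hline : ConvexOn ℝ univ (fun s : ℝ => g (x + s • (y - x))) := by
    have e : (fun s : ℝ => g (x + s • (y - x))) = g ∘ AffineMap.lineMap x y := by
      funext s; simp [AffineMap.lineMap_apply, add_comm]
    simpa [e] using hc.comp_affineMap (AffineMap.lineMap x y)
  have hderiv : HasDerivAt (fun s : ℝ => g (x + s • (y - x))) ⟪g₀, y - x⟫ 0 :=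
    HasGradientAt.hasDerivAt_add_smul_s10 (by simpa using hg)
  simpa [slope_def_field] using
    hline.le_slope_of_hasDerivAt (mem_univ 0) (mem_univ 1) one_pos hderiv

theorem le_add_inner_add_of_lipschitz_gradient {g' : E → E} {L : ℝ}
    (hg : ∀ y, HasGradientAt g (g' y) y) (hgL : ∀ a b, ‖g' a - g' b‖ ≤ L * ‖a - b‖) (x y : E) :
    g y ≤ g x + ⟪g' x, y - x⟫ + L / 2 * ‖y - x‖ ^ 2 := by
  set v := y - x
  set q : ℝ → ℝ := fun t => g (x + t • v) - t * ⟪g' x, v⟫ - L / 2 * t ^ 2 * ‖v‖ ^ 2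
  have hq : ∀ t, HasDerivAt q (⟪g' (x + t • v), v⟫ - ⟪g' x, v⟫ - L * t * ‖v‖ ^ 2) t := by
    intro t
    have hquad : HasDerivAt (fun s : ℝ => L / 2 * s ^ 2 * ‖v‖ ^ 2) (L * t * ‖v‖ ^ 2) t := by
      refine (((hasDerivAt_pow 2 t).const_mul (L / 2)).mul_const (‖v‖ ^ 2)).congr_deriv ?_
      simp only [Nat.cast_ofNat, Nat.add_one_sub_one, pow_one]; ring
    exact ((((hg (x + t • v)).hasDerivAt_add_smul_s10).sub
      ((hasDerivAt_id t).mul_const ⟪g' x, v⟫)).sub hquad).congr_deriv (by simp)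
  have hq_nonpos : ∀ t ∈ interior (Icc (0 : ℝ) 1), deriv q t ≤ 0 := by
    intro t ht
    rw [interior_Icc] at ht
    rw [(hq t).deriv, ← inner_sub_left, sub_nonpos]
    calc ⟪g' (x + t • v) - g' x, v⟫ ≤ ‖g' (x + t • v) - g' x‖ * ‖v‖ := real_inner_le_norm _ _
      _ ≤ L * ‖t • v‖ * ‖v‖ := by
          gcongr
          simpa using hgL (x + t • v) x
      _ = L * t * ‖v‖ ^ 2 := by rw [norm_smul, Real.norm_of_nonneg ht.1.le]; ring
  have hanti : AntitoneOn q (Icc 0 1) :=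
    antitoneOn_of_deriv_nonpos (convex_Icc 0 1)
      (fun t _ => (hq t).continuousAt.continuousWithinAt)
      (fun t _ => (hq t).differentiableAt.differentiableWithinAt) hq_nonpos
  have h10 := hanti (left_mem_Icc.2 zero_le_one) (right_mem_Icc.2 zero_le_one) zero_le_one
  simp only [q, v, one_smul, add_sub_cancel, zero_smul, add_zero] at h10
  linarith

theorem IsProxPoint.norm_sub_sq_le {h : E → ℝ} {g' : E → E} {L γ : ℝ} {w p : E}
    (hp : IsProxPoint h γ w p) (hh : ConvexOn ℝ univ h) (hγ : 0 < γ)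
    (hg : ∀ y, HasGradientAt g (g' y) y) (hgc : ConvexOn ℝ univ g)
    (hgL : ∀ a b, ‖g' a - g' b‖ ≤ L * ‖a - b‖) (hγL : γ * L ≤ 1) (x z : E) :
    ‖p - z‖ ^ 2 ≤ ‖x - z‖ ^ 2 - 2 * γ * ((g p + h p) - (g z + h z))
      + 2 * ⟪w - (x - γ • g' x), p - z⟫ := by
  have hprox := hp.inner_sub_le hh hγ z
  have hconv := mul_le_mul_of_nonneg_left (hgc.inner_gradient_le (hg x) z) hγ.le
  have hdesc := mul_le_mul_of_nonneg_left
    (le_add_inner_add_of_lipschitz_gradient hg hgL x p) hγ.le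
  have hsmall : γ * L * ‖p - x‖ ^ 2 ≤ ‖p - x‖ ^ 2 := mul_le_of_le_one_left (sq_nonneg _) hγL
  have hpol : ‖x - z‖ ^ 2 = ‖p - x‖ ^ 2 + 2 * ⟪x - p, p - z⟫ + ‖p - z‖ ^ 2 := by
    rw [← sub_add_sub_cancel x p z, norm_add_sq_real, norm_sub_rev x p]
  have hinner : ⟪w - p, z - p⟫ = -⟪x - p, p - z⟫ + γ * ⟪g' x, p - x⟫ - γ * ⟪g' x, z - x⟫
      - ⟪w - (x - γ • g' x), p - z⟫ := by
    simp only [inner_sub_left, inner_sub_right, real_inner_smul_left]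
    ring
  linarith

end Gradient

theorem norm_sub_sub_smul_sq_eq {γ : ℝ} (hγ : γ ≠ 0) (w x v : E) :
    ‖w - (x - γ • v)‖ ^ 2 = γ ^ 2 * ‖(-(1 / γ)) • (w - x) - v‖ ^ 2 := by
  have hdev : w - (x - γ • v) = (-γ) • ((-(1 / γ)) • (w - x) - v) := by
    rw [smul_sub, smul_smul (-γ), neg_mul_neg, mul_one_div_cancel hγ, one_smul]
    module
  rw [hdev, norm_smul, mul_pow, Real.norm_eq_abs, abs_neg, sq_abs]

theorem sum_sagaW_sub_eq_zero {d n : ℕ} (hn : n ≠ 0) (γ : ℝ)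
    (f' : Fin n → EuclideanSpace ℝ (Fin d) → EuclideanSpace ℝ (Fin d))
    (x : EuclideanSpace ℝ (Fin d)) (φ : Fin n → EuclideanSpace ℝ (Fin d)) :
    ∑ j, (sagaW d n γ f' x φ j - (x - γ • ((1 / (n : ℝ)) • ∑ i, f' i x))) = 0 := by
  have hn' : (n : ℝ) ≠ 0 := Nat.cast_ne_zero.2 hn
  have hmean : ∀ v : Fin n → EuclideanSpace ℝ (Fin d),
      ∑ _j : Fin n, (1 / (n : ℝ)) • ∑ i, v i = ∑ i, v i := by
    intro v
    rw [Finset.sum_const, Finset.card_univ, Fintype.card_fin, ← Nat.cast_smul_eq_nsmul ℝ,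
      smul_smul, mul_one_div_cancel hn', one_smul]
  simp only [sagaW, sub_sub_sub_cancel_left, ← smul_sub, ← Finset.smul_sum, Finset.sum_sub_distrib,
    Finset.sum_add_distrib, hmean, sub_add_cancel, sub_self, smul_zero]

theorem saga_nonsc_descent_bound_general (d n : ℕ) (hn : 1 ≤ n) (L γ : ℝ)
    (hL : 0 < L) (hγ : 0 < γ) (hγL : γ ≤ 1 / L)
    (f : Fin n → EuclideanSpace ℝ (Fin d) → ℝ)
    (f' : Fin n → EuclideanSpace ℝ (Fin d) → EuclideanSpace ℝ (Fin d))
    (hgrad : ∀ i x, HasGradientAt (f i) (f' i x) x)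
    (hconv : ∀ i, ConvexOn ℝ Set.univ (f i))
    (hsmooth : ∀ i x y, ‖f' i x - f' i y‖ ≤ L * ‖x - y‖)
    (h : EuclideanSpace ℝ (Fin d) → ℝ) (hh : ConvexOn ℝ Set.univ h)
    (xstar : EuclideanSpace ℝ (Fin d))
    (x : EuclideanSpace ℝ (Fin d)) (φ : Fin n → EuclideanSpace ℝ (Fin d))
    (xP : Fin n → EuclideanSpace ℝ (Fin d))
    (hP : ∀ j y, h (xP j) + 1 / (2 * γ) * ‖xP j - sagaW d n γ f' x φ j‖ ^ 2
        ≤ h y + 1 / (2 * γ) * ‖y - sagaW d n γ f' x φ j‖ ^ 2) :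
    (1 / (n : ℝ)) * ∑ j, ‖xP j - xstar‖ ^ 2
      ≤ ‖x - xstar‖ ^ 2
        - 2 * γ * ((1 / (n : ℝ)) * ∑ j,
            (((1 / (n : ℝ)) * ∑ i, f i (xP j) + h (xP j))
              - ((1 / (n : ℝ)) * ∑ i, f i xstar + h xstar)))
        + 2 * γ ^ 2 * ((1 / (n : ℝ)) * ∑ j,
            ‖(-(1 / γ)) • (sagaW d n γ f' x φ j - x) - (1 / (n : ℝ)) • ∑ i, f' i x‖ ^ 2) := by
  have hn0 : n ≠ 0 := Nat.one_le_iff_ne_zero.mp hn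
  set G := (1 / (n : ℝ)) • ∑ i, f' i x
  set w := sagaW d n γ f' x φ
  have hstep : ∀ j, ‖xP j - xstar‖ ^ 2 ≤ ‖x - xstar‖ ^ 2
      - 2 * γ * (((1 / (n : ℝ)) * ∑ i, f i (xP j) + h (xP j))
        - ((1 / (n : ℝ)) * ∑ i, f i xstar + h xstar))
      + 2 * ⟪w j - (x - γ • G), xP j - xstar⟫ := fun j =>
    IsProxPoint.norm_sub_sq_le (hP j) hh hγ
      (fun y => (HasGradientAt.fun_sum fun i _ => hgrad i y).const_mul _)
      ((ConvexOn.fun_sum convex_univ fun i _ => hconv i).smul (by positivity))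
      (norm_average_sub_le hn0 hsmooth) ((le_div_iff₀ hL).mp hγL) x xstar
  have hcross : ∑ j, ⟪w j - (x - γ • G), xP j - xstar⟫ ≤ ∑ j, ‖w j - (x - γ • G)‖ ^ 2 :=
    IsProxPoint.sum_inner_sub_le hP hh hγ (sum_sagaW_sub_eq_zero hn0 γ f' x φ) xstar
  have hsum := Finset.sum_le_sum fun j (_ : j ∈ Finset.univ) => hstep j
  rw [Finset.sum_add_distrib, Finset.sum_sub_distrib, Finset.sum_const, Finset.card_univ,
    Fintype.card_fin, nsmul_eq_mul, ← Finset.mul_sum, ← Finset.mul_sum] at hsum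
  simp only [norm_sub_sub_smul_sq_eq hγ.ne', ← Finset.mul_sum] at hcross
  have hn' : (n : ℝ) ≠ 0 := Nat.cast_ne_zero.2 hn0
  calc 1 / (n : ℝ) * ∑ j, ‖xP j - xstar‖ ^ 2
      ≤ 1 / (n : ℝ) * (n * ‖x - xstar‖ ^ 2 - 2 * γ * ∑ j,
            (((1 / (n : ℝ)) * ∑ i, f i (xP j) + h (xP j))
              - ((1 / (n : ℝ)) * ∑ i, f i xstar + h xstar))
          + 2 * (γ ^ 2 * ∑ j, ‖(-(1 / γ)) • (w j - x) - G‖ ^ 2)) := by gcongr; linarith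
    _ = _ := by field_simp

theorem saga_nonsc_descent_bound (d n : ℕ) (hn : 1 ≤ n) (L γ : ℝ)
    (hL : 0 < L) (hγ : 0 < γ) (hγL : γ ≤ 1 / L)
    (f : Fin n → EuclideanSpace ℝ (Fin d) → ℝ)
    (f' : Fin n → EuclideanSpace ℝ (Fin d) → EuclideanSpace ℝ (Fin d))
    (hgrad : ∀ i x, HasGradientAt (f i) (f' i x) x)
    (hconv : ∀ i, ConvexOn ℝ Set.univ (f i))
    (hsmooth : ∀ i x y, ‖f' i x - f' i y‖ ≤ L * ‖x - y‖)
    (h : EuclideanSpace ℝ (Fin d) → ℝ) (hh : ConvexOn ℝ Set.univ h)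
    (xstar : EuclideanSpace ℝ (Fin d))
    (hstar : ∀ y, (1 / (n : ℝ)) * ∑ i, f i xstar + h xstar
        ≤ (1 / (n : ℝ)) * ∑ i, f i y + h y)
    (x : EuclideanSpace ℝ (Fin d)) (φ : Fin n → EuclideanSpace ℝ (Fin d))
    (xP : Fin n → EuclideanSpace ℝ (Fin d))
    (hP : ∀ j y, h (xP j) + 1 / (2 * γ) * ‖xP j - sagaW d n γ f' x φ j‖ ^ 2
        ≤ h y + 1 / (2 * γ) * ‖y - sagaW d n γ f' x φ j‖ ^ 2) :
    (1 / (n : ℝ)) * ∑ j, ‖xP j - xstar‖ ^ 2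
      ≤ ‖x - xstar‖ ^ 2
        - 2 * γ * ((1 / (n : ℝ)) * ∑ j,
            (((1 / (n : ℝ)) * ∑ i, f i (xP j) + h (xP j))
              - ((1 / (n : ℝ)) * ∑ i, f i xstar + h xstar)))
        + 2 * γ ^ 2 * ((1 / (n : ℝ)) * ∑ j,
            ‖(-(1 / γ)) • (sagaW d n γ f' x φ j - x) - (1 / (n : ℝ)) • ∑ i, f' i x‖ ^ 2) :=
  saga_nonsc_descent_bound_general d n hn L γ hL hγ hγL f f' hgrad hconv hsmooth h hh xstar x φ xP
    hP
end
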